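/- Suppose (P,r) is a weakly communicating finite MDP whose optimal bias function h* satisfies sp(h*) ≤ H. Fix ε ∈ (0,1] and set γ = 1 − ε/H. Then for any ε_γ ∈ [0, 1/(1−γ)], if π is any ε_γ-optimal policy for the discounted MDP (P, r, γ), the elementwise inequality ρ* − ρ^π ≤ (8 + 3ε_γ/H)·ε·1 holds. -/

import Mathlib

open Filter Matrix MeasureTheory
open scoped BigOperators ENNReal

namespace PaperMDP

variable {S A : Type*}

section Core

variable [Fintype S] [Fintype A] [DecidableEq S] [Nonempty S] [Nonempty A]

/-- `p` is a transition probability kernel on `S × A`. -/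
def IsKernel (p : S → A → S → ℝ) : Prop :=
  ∀ s a, (∀ s', 0 ≤ p s a s') ∧ (∑ s', p s a s') = 1

/-- `pol` is a stationary Markov (randomized) policy. -/
def IsPolicy (pol : S → A → ℝ) : Prop :=
  ∀ s, (∀ a, 0 ≤ pol s a) ∧ (∑ a, pol s a) = 1

/-- Transition matrix `P_π` induced by a policy. -/
def polMat (p : S → A → S → ℝ) (pol : S → A → ℝ) : Matrix S S ℝ :=
  Matrix.of fun s s' => ∑ a, pol s a * p s a s'

/-- Reward vector `r_π` induced by a policy. -/
def polRew (r : S → A → ℝ) (pol : S → A → ℝ) : S → ℝ := fun s => ∑ a, pol s a * r s a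

/-- The deterministic policy induced by `d : S → A`, viewed as a randomized policy. -/
def detPol [DecidableEq A] (d : S → A) : S → A → ℝ := fun s a => if a = d s then 1 else 0

/-- `(I - γ M)⁻¹ v = ∑_{t ≥ 0} γ^t M^t v` (Neumann series). -/
noncomputable def resApply (γ : ℝ) (M : Matrix S S ℝ) (v : S → ℝ) : S → ℝ :=
  ∑' t : ℕ, γ ^ t • (M ^ t *ᵥ v)

/-- Discounted value function `V_γ^π`. -/
noncomputable def dval (p : S → A → S → ℝ) (r : S → A → ℝ) (γ : ℝ) (pol : S → A → ℝ) :
    S → ℝ :=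
  resApply γ (polMat p pol) (polRew r pol)

/-- Optimal discounted value function `V_γ^*`. -/
noncomputable def dvalStar (p : S → A → S → ℝ) (r : S → A → ℝ) (γ : ℝ) : S → ℝ := fun s =>
  ⨆ q : {q : S → A → ℝ // IsPolicy q}, dval p r γ q.1 s

/-- `pol` is an optimal policy for the `γ`-discounted MDP `(p, r, γ)`. -/
def DiscountedOptimal (p : S → A → S → ℝ) (r : S → A → ℝ) (γ : ℝ) (pol : S → A → ℝ) :
    Prop :=
  IsPolicy pol ∧ ∀ q : S → A → ℝ, IsPolicy q → ∀ s, dval p r γ q s ≤ dval p r γ pol s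

/-- Cesàro limit of a sequence of vectors. -/
noncomputable def cesaro (f : ℕ → S → ℝ) : S → ℝ :=
  limUnder atTop fun N : ℕ => (N : ℝ)⁻¹ • ∑ T ∈ Finset.range N, f T

/-- The gain (long-run average reward) `ρ^π`. -/
noncomputable def gain (p : S → A → S → ℝ) (r : S → A → ℝ) (pol : S → A → ℝ) : S → ℝ :=
  cesaro fun t => (polMat p pol ^ t) *ᵥ polRew r pol

/-- The bias function `h^π`. -/
noncomputable def bias (p : S → A → S → ℝ) (r : S → A → ℝ) (pol : S → A → ℝ) : S → ℝ :=
  cesaro fun T => ∑ t ∈ Finset.range T, ((polMat p pol ^ t) *ᵥ polRew r pol - gain p r pol)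

/-- Blackwell optimality of a policy. -/
def Blackwell (p : S → A → S → ℝ) (r : S → A → ℝ) (pol : S → A → ℝ) : Prop :=
  IsPolicy pol ∧ ∃ γ₀ ∈ Set.Ioo (0 : ℝ) 1, ∀ γ ∈ Set.Ico γ₀ 1,
    ∀ q : S → A → ℝ, IsPolicy q → ∀ s, dval p r γ q s ≤ dval p r γ pol s

/-- The optimal gain `ρ^*(s) = sup_π ρ^π(s)`. -/
noncomputable def gainStar (p : S → A → S → ℝ) (r : S → A → ℝ) : S → ℝ := fun s =>
  ⨆ q : {q : S → A → ℝ // IsPolicy q}, gain p r q.1 s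

/-- Span seminorm `sp(v) = max v - min v`. -/
noncomputable def span (v : S → ℝ) : ℝ := (⨆ s, v s) - (⨅ s, v s)

/-- `s'` is reachable from `s` in the Markov chain with transition matrix `M`. -/
def Reaches (M : Matrix S S ℝ) (s s' : S) : Prop := ∃ t : ℕ, 0 < (M ^ t) s s'

/-- A state of a finite Markov chain is recurrent iff its communicating class is closed. -/
def Recurrent (M : Matrix S S ℝ) (s : S) : Prop := ∀ s', Reaches M s s' → Reaches M s' s

/-- Weakly communicating MDP. -/
def WeaklyCommunicating (p : S → A → S → ℝ) : Prop :=
  ∃ S1 : Set S,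
    (∀ s ∈ S1, ∀ pol : S → A → ℝ, IsPolicy pol → ¬Recurrent (polMat p pol) s) ∧
    ∀ s ∉ S1, ∀ s' ∉ S1, ∃ pol : S → A → ℝ, IsPolicy pol ∧ Reaches (polMat p pol) s s'

/-- The probability that the chain `M` started at `s` is in a transient state at time `t`.
For a finite chain, `E_s[T_{R}] = ∑_{t} transientMass M s t`, since the set of recurrent
states is closed. -/
noncomputable def transientMass (M : Matrix S S ℝ) (s : S) (t : ℕ) : ℝ :=
  ∑ s', Set.indicator {x : S | ¬Recurrent M x} (fun x => (M ^ t) s x) s'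

/-- The bounded transient time property with parameter `B`:
`E_s^π[T_{R^π}] ≤ B` for every deterministic stationary policy and every state. -/
def BoundedTransientTime [DecidableEq A] (p : S → A → S → ℝ) (B : ℝ) : Prop :=
  ∀ (d : S → A) (s : S) (n : ℕ),
    (∑ t ∈ Finset.range n, transientMass (polMat p (detPol d)) s t) ≤ B

/-- One-step variance vector `𝕍_{P}[V]`. -/
noncomputable def oneStepVar (M : Matrix S S ℝ) (V : S → ℝ) : S → ℝ := fun s =>
  ∑ s', M s s' * (V s' - (M *ᵥ V) s) ^ 2

/-- Probability of the path `(S_0, …, S_T) = path` for the chain `M` started at `s`. -/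
noncomputable def pathProb (M : Matrix S S ℝ) (s : S) {T : ℕ} (path : Fin (T + 1) → S) : ℝ :=
  (if path 0 = s then 1 else 0) * ∏ i : Fin T, M (path i.castSucc) (path i.succ)

/-- Expectation of a function of `(S_0, …, S_T)` for the chain `M` started at `s`. -/
noncomputable def pathExp (M : Matrix S S ℝ) (s : S) (T : ℕ) (f : (Fin (T + 1) → S) → ℝ) :
    ℝ :=
  ∑ path : Fin (T + 1) → S, pathProb M s path * f path

/-- Variance of a function of `(S_0, …, S_T)` for the chain `M` started at `s`. -/
noncomputable def pathVar (M : Matrix S S ℝ) (s : S) (T : ℕ) (f : (Fin (T + 1) → S) → ℝ) :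
    ℝ :=
  pathExp M s T fun path => (f path - pathExp M s T f) ^ 2

/-- Variance of the infinite-horizon discounted return, `𝕍_s^π[∑_{t} γ^t R_t]`,
as the limit of the variances of the truncated returns. -/
noncomputable def returnVar (M : Matrix S S ℝ) (rv : S → ℝ) (γ : ℝ) : S → ℝ := fun s =>
  limUnder atTop fun T : ℕ =>
    pathVar M s T fun path => ∑ t : Fin (T + 1), γ ^ (t : ℕ) * rv (path t)

end Core

section MyAux
set_option linter.unusedSectionVars false
open scoped Topology


section AuxMat
variable {S : Type*} [Fintype S] [DecidableEq S] [Nonempty S]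

/-- Row-stochastic matrix. -/
def Stoch (M : Matrix S S ℝ) : Prop := (∀ i j, 0 ≤ M i j) ∧ ∀ i, ∑ j, M i j = 1

lemma Stoch.one : Stoch (1 : Matrix S S ℝ) := by
  constructor
  · intro i j
    by_cases h : i = j <;> simp [Matrix.one_apply, h]
  · intro i; simp [Matrix.one_apply]

lemma Stoch.mul {M N : Matrix S S ℝ} (hM : Stoch M) (hN : Stoch N) : Stoch (M * N) := by
  constructor
  · intro i j
    rw [Matrix.mul_apply]
    exact Finset.sum_nonneg fun k _ => mul_nonneg (hM.1 i k) (hN.1 k j)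
  · intro i
    simp only [Matrix.mul_apply]
    rw [Finset.sum_comm]
    have : ∀ k, ∑ j, M i k * N k j = M i k := by
      intro k; rw [← Finset.mul_sum, hN.2 k, mul_one]
    simp only [this, hM.2 i]

lemma Stoch.pow {M : Matrix S S ℝ} (hM : Stoch M) (t : ℕ) : Stoch (M ^ t) := by
  induction t with
  | zero => simpa using Stoch.one
  | succ n ih => rw [pow_succ]; exact ih.mul hM

lemma Stoch.entry_le_one {M : Matrix S S ℝ} (hM : Stoch M) (i j : S) : M i j ≤ 1 := by
  calc M i j ≤ ∑ k, M i k := Finset.single_le_sum (fun k _ => hM.1 i k) (Finset.mem_univ j)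
  _ = 1 := hM.2 i

lemma Stoch.mulVec_le {M : Matrix S S ℝ} (hM : Stoch M) {v : S → ℝ} {c : ℝ}
    (hv : ∀ j, v j ≤ c) (i : S) : (M *ᵥ v) i ≤ c := by
  have : (M *ᵥ v) i ≤ ∑ j, M i j * c := by
    apply Finset.sum_le_sum
    intro j _
    exact mul_le_mul_of_nonneg_left (hv j) (hM.1 i j)
  calc (M *ᵥ v) i ≤ ∑ j, M i j * c := this
  _ = (∑ j, M i j) * c := by rw [Finset.sum_mul]
  _ = c := by rw [hM.2 i, one_mul]

lemma Stoch.le_mulVec {M : Matrix S S ℝ} (hM : Stoch M) {v : S → ℝ} {c : ℝ}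
    (hv : ∀ j, c ≤ v j) (i : S) : c ≤ (M *ᵥ v) i := by
  have : ∑ j, M i j * c ≤ (M *ᵥ v) i := by
    apply Finset.sum_le_sum
    intro j _
    exact mul_le_mul_of_nonneg_left (hv j) (hM.1 i j)
  calc c = (∑ j, M i j) * c := by rw [hM.2 i, one_mul]
  _ = ∑ j, M i j * c := by rw [Finset.sum_mul]
  _ ≤ (M *ᵥ v) i := this

lemma Stoch.mulVec_mono {M : Matrix S S ℝ} (hM : Stoch M) {u v : S → ℝ}
    (huv : ∀ j, u j ≤ v j) (i : S) : (M *ᵥ u) i ≤ (M *ᵥ v) i := by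
  apply Finset.sum_le_sum
  intro j _
  exact mul_le_mul_of_nonneg_left (huv j) (hM.1 i j)

lemma Stoch.mulVec_const {M : Matrix S S ℝ} (hM : Stoch M) (c : ℝ) :
    M *ᵥ (fun _ => c) = fun _ => c := by
  funext i
  show ∑ j, M i j * c = c
  rw [← Finset.sum_mul, hM.2 i, one_mul]

/-- Cesàro averages of matrix powers. -/
noncomputable def cesMat (M : Matrix S S ℝ) (N : ℕ) : Matrix S S ℝ :=
  (N : ℝ)⁻¹ • ∑ t ∈ Finset.range N, M ^ t

lemma cesMat_nonneg {M : Matrix S S ℝ} (hM : Stoch M) (N : ℕ) (i j : S) :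
    0 ≤ cesMat M N i j := by
  have : (0:ℝ) ≤ (∑ t ∈ Finset.range N, M ^ t) i j := by
    rw [Matrix.sum_apply]
    exact Finset.sum_nonneg fun t _ => (hM.pow t).1 i j
  simpa [cesMat] using mul_nonneg (by positivity) this

lemma cesMat_le_one {M : Matrix S S ℝ} (hM : Stoch M) (N : ℕ) (i j : S) :
    cesMat M N i j ≤ 1 := by
  have h1 : (∑ t ∈ Finset.range N, M ^ t) i j ≤ N := by
    rw [Matrix.sum_apply]
    calc ∑ t ∈ Finset.range N, (M ^ t) i j ≤ ∑ t ∈ Finset.range N, 1 :=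
      Finset.sum_le_sum fun t _ => (hM.pow t).entry_le_one i j
    _ = N := by simp
  rcases Nat.eq_zero_or_pos N with h | h
  · simp [cesMat, h]
  · have hN : (0:ℝ) < N := by exact_mod_cast h
    have : cesMat M N i j = (N:ℝ)⁻¹ * (∑ t ∈ Finset.range N, M ^ t) i j := by
      simp [cesMat]
    rw [this]
    rw [inv_mul_le_iff₀ hN]
    linarith

lemma cesMat_entry {M : Matrix S S ℝ} (N : ℕ) (i j : S) :
    cesMat M N i j = (N:ℝ)⁻¹ * ∑ t ∈ Finset.range N, (M ^ t) i j := by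
  simp [cesMat, Matrix.sum_apply]

lemma cesMat_rowsum {M : Matrix S S ℝ} (hM : Stoch M) {N : ℕ} (hN : 1 ≤ N) (i : S) :
    ∑ j, cesMat M N i j = 1 := by
  have h1 : ∑ j, cesMat M N i j = (N:ℝ)⁻¹ * ∑ t ∈ Finset.range N, ∑ j, (M ^ t) i j := by
    simp only [cesMat_entry, ← Finset.mul_sum]
    rw [Finset.sum_comm]
  rw [h1]
  have : ∀ t ∈ Finset.range N, ∑ j, (M ^ t) i j = 1 := fun t _ => (hM.pow t).2 i
  rw [Finset.sum_congr rfl this]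
  have hN0 : (N:ℝ) ≠ 0 := by positivity
  simp [hN0]

lemma cesMat_mul_pow (M : Matrix S S ℝ) (N u : ℕ) :
    cesMat M N * M ^ u = (N:ℝ)⁻¹ • ∑ t ∈ Finset.range N, M ^ (t + u) := by
  rw [cesMat, Matrix.smul_mul, Matrix.sum_mul]
  congr 1
  apply Finset.sum_congr rfl
  intro t _
  rw [pow_add]

lemma pow_mul_cesMat (M : Matrix S S ℝ) (N u : ℕ) :
    M ^ u * cesMat M N = cesMat M N * M ^ u := by
  rw [cesMat_mul_pow, cesMat, Matrix.mul_smul, Matrix.mul_sum]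
  congr 1
  apply Finset.sum_congr rfl
  intro t _
  rw [← pow_add, add_comm]

lemma shift_entry_bound {M : Matrix S S ℝ} (hM : Stoch M) (N u : ℕ) (i j : S) :
    |(cesMat M N * M ^ u) i j - cesMat M N i j| ≤ u / N := by
  rcases Nat.eq_zero_or_pos N with h | h
  · simp [h, cesMat]
  have hN0 : (0:ℝ) < N := by exact_mod_cast h
  set f : ℕ → ℝ := fun t => (M ^ t) i j with hf
  have hf0 : ∀ t, 0 ≤ f t := fun t => (hM.pow t).1 i j
  have hf1 : ∀ t, f t ≤ 1 := fun t => (hM.pow t).entry_le_one i j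
  have e1 : (cesMat M N * M ^ u) i j = (N:ℝ)⁻¹ * ∑ t ∈ Finset.range N, f (t + u) := by
    rw [cesMat_mul_pow, Matrix.smul_apply, Matrix.sum_apply]
    rfl
  have e2 : cesMat M N i j = (N:ℝ)⁻¹ * ∑ t ∈ Finset.range N, f t := cesMat_entry N i j
  have key : |∑ t ∈ Finset.range N, f (t + u) - ∑ t ∈ Finset.range N, f t| ≤ u := by
    have hA : ∑ t ∈ Finset.range (u + N), f t
        = ∑ t ∈ Finset.range u, f t + ∑ t ∈ Finset.range N, f (t + u) := by
      rw [Finset.sum_range_add]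
      congr 1
      exact Finset.sum_congr rfl fun t _ => by rw [add_comm]
    have hB : ∑ t ∈ Finset.range (u + N), f t
        = ∑ t ∈ Finset.range N, f t + ∑ t ∈ Finset.range u, f (N + t) := by
      rw [add_comm u N, Finset.sum_range_add]
    have hEq : ∑ t ∈ Finset.range N, f (t + u) - ∑ t ∈ Finset.range N, f t
        = ∑ t ∈ Finset.range u, f (N + t) - ∑ t ∈ Finset.range u, f t := by
      have := hA.symm.trans hB
      linarith
    rw [hEq]
    have b1 : ∑ t ∈ Finset.range u, f (N + t) ≤ u := by
      calc ∑ t ∈ Finset.range u, f (N + t) ≤ ∑ t ∈ Finset.range u, 1 :=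
        Finset.sum_le_sum fun t _ => hf1 _
      _ = u := by simp
    have b2 : ∑ t ∈ Finset.range u, f t ≤ u := by
      calc ∑ t ∈ Finset.range u, f t ≤ ∑ t ∈ Finset.range u, 1 :=
        Finset.sum_le_sum fun t _ => hf1 _
      _ = u := by simp
    have b3 : 0 ≤ ∑ t ∈ Finset.range u, f (N + t) := Finset.sum_nonneg fun t _ => hf0 _
    have b4 : 0 ≤ ∑ t ∈ Finset.range u, f t := Finset.sum_nonneg fun t _ => hf0 _
    rw [abs_le]
    constructor <;> linarith
  rw [e1, e2, ← mul_sub, abs_mul, abs_of_nonneg (by positivity : (0:ℝ) ≤ (N:ℝ)⁻¹)]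
  rw [div_eq_inv_mul]
  exact mul_le_mul_of_nonneg_left key (by positivity)

lemma avg_entry_bound {M : Matrix S S ℝ} (hM : Stoch M) (N : ℕ) {k : ℕ} (hk : 1 ≤ k)
    (i j : S) : |(cesMat M N * cesMat M k) i j - cesMat M N i j| ≤ k / N := by
  have hk0 : (0:ℝ) < k := by exact_mod_cast hk
  have e0 : cesMat M k = (k:ℝ)⁻¹ • ∑ u ∈ Finset.range k, M ^ u := rfl
  have e1 : cesMat M N * cesMat M k = (k:ℝ)⁻¹ • ∑ u ∈ Finset.range k, cesMat M N * M ^ u := by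
    rw [e0, Matrix.mul_smul, Matrix.mul_sum]
  have e2 : (cesMat M N * cesMat M k) i j
      = (k:ℝ)⁻¹ * ∑ u ∈ Finset.range k, (cesMat M N * M ^ u) i j := by
    rw [e1, Matrix.smul_apply, Matrix.sum_apply]
    rfl
  have e3 : cesMat M N i j = (k:ℝ)⁻¹ * ∑ u ∈ Finset.range k, cesMat M N i j := by
    rw [Finset.sum_const, Finset.card_range, nsmul_eq_mul]
    field_simp
  rw [e2]
  nth_rewrite 1 [e3]
  rw [← mul_sub, ← Finset.sum_sub_distrib, abs_mul,
    abs_of_nonneg (by positivity : (0:ℝ) ≤ (k:ℝ)⁻¹)]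
  have key : |∑ u ∈ Finset.range k, ((cesMat M N * M ^ u) i j - cesMat M N i j)|
      ≤ (k:ℝ) * ((k:ℝ) / N) := by
    calc |∑ u ∈ Finset.range k, ((cesMat M N * M ^ u) i j - cesMat M N i j)|
        ≤ ∑ u ∈ Finset.range k, |(cesMat M N * M ^ u) i j - cesMat M N i j| :=
          Finset.abs_sum_le_sum_abs _ _
    _ ≤ ∑ _u ∈ Finset.range k, ((k:ℝ) / N) := by
        apply Finset.sum_le_sum
        intro u hu
        calc |(cesMat M N * M ^ u) i j - cesMat M N i j| ≤ u / N := shift_entry_bound hM N u i j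
        _ ≤ k / N := by
            rw [div_eq_mul_inv, div_eq_mul_inv]
            have : (u:ℝ) ≤ k := by
              exact_mod_cast (Finset.mem_range.mp hu).le
            exact mul_le_mul_of_nonneg_right this (by positivity)
    _ = (k:ℝ) * ((k:ℝ) / N) := by
        rw [Finset.sum_const, Finset.card_range, nsmul_eq_mul]
  calc (k:ℝ)⁻¹ * |∑ u ∈ Finset.range k, ((cesMat M N * M ^ u) i j - cesMat M N i j)|
      ≤ (k:ℝ)⁻¹ * ((k:ℝ) * ((k:ℝ) / N)) := mul_le_mul_of_nonneg_left key (by positivity)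
  _ = (k:ℝ) / N := by field_simp

lemma pow_mul_eq_self {M Q : Matrix S S ℝ} (hMQ : M * Q = Q) (t : ℕ) : M ^ t * Q = Q := by
  induction t with
  | zero => simp
  | succ n ih => rw [pow_succ, mul_assoc, hMQ, ih]

lemma mul_pow_eq_self {M Q : Matrix S S ℝ} (hQM : Q * M = Q) (t : ℕ) : Q * M ^ t = Q := by
  induction t with
  | zero => simp
  | succ n ih => rw [pow_succ, ← mul_assoc, ih, hQM]

lemma cesMat_mul_eq_self {M Q : Matrix S S ℝ} (hMQ : M * Q = Q) {N : ℕ} (hN : 1 ≤ N) :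
    cesMat M N * Q = Q := by
  ext i j
  have h1 : (cesMat M N * Q) i j = (N:ℝ)⁻¹ * ∑ t ∈ Finset.range N, (M ^ t * Q) i j := by
    rw [cesMat, Matrix.smul_mul, Matrix.sum_mul, Matrix.smul_apply, Matrix.sum_apply]
    rfl
  rw [h1, Finset.sum_congr rfl fun t _ => by rw [pow_mul_eq_self hMQ t],
    Finset.sum_const, Finset.card_range, nsmul_eq_mul]
  have hN0 : (N:ℝ) ≠ 0 := by positivity
  field_simp

theorem exists_cesaro_limit {M : Matrix S S ℝ} (hM : Stoch M) :
    ∃ Q : Matrix S S ℝ, Stoch Q ∧ M * Q = Q ∧ Q * M = Q ∧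
      ∀ i j, Tendsto (fun N => cesMat M N i j) atTop (𝓝 (Q i j)) := by
  classical
  -- compactness: pick a subsequential limit
  set K : Set (S → S → ℝ) := Set.univ.pi fun _ : S => Set.univ.pi fun _ : S => Set.Icc (0:ℝ) 1
    with hKdef
  have hK : IsCompact K := isCompact_univ_pi fun _ => isCompact_univ_pi fun _ => isCompact_Icc
  have hmem : ∀ N, (fun i j => cesMat M N i j) ∈ K := by
    intro N
    rw [hKdef]
    refine Set.mem_univ_pi.mpr fun i => Set.mem_univ_pi.mpr fun j => ?_
    exact ⟨cesMat_nonneg hM N i j, cesMat_le_one hM N i j⟩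
  obtain ⟨Qf, hQK, φ, hφ, hconv⟩ := hK.tendsto_subseq hmem
  set Q : Matrix S S ℝ := Matrix.of Qf with hQdef
  have hsub : ∀ i j, Tendsto (fun m => cesMat M (φ m) i j) atTop (𝓝 (Q i j)) := by
    intro i j
    have h1 := tendsto_pi_nhds.mp hconv i
    exact tendsto_pi_nhds.mp h1 j
  have hφm : ∀ m, m ≤ φ m := fun m => hφ.le_apply
  have hφtop : Tendsto φ atTop atTop := hφ.tendsto_atTop
  have hAMsub : ∀ i j, Tendsto (fun m => (cesMat M (φ m) * M) i j) atTop (𝓝 (Q i j)) := by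
    intro i j
    have hz : Tendsto (fun m => (cesMat M (φ m) * M) i j - cesMat M (φ m) i j) atTop (𝓝 0) := by
      apply squeeze_zero_norm (a := fun m => 1 / (φ m : ℝ))
      · intro m
        have := shift_entry_bound hM (φ m) 1 i j
        rw [pow_one] at this
        simpa [one_div] using this
      · exact tendsto_one_div_atTop_nhds_zero_nat.comp hφtop
    have := (hsub i j).add hz
    simpa using this
  -- Q * M = Q
  have hQM : Q * M = Q := by
    ext i j
    have h1 : Tendsto (fun m => (cesMat M (φ m) * M) i j) atTop (𝓝 ((Q * M) i j)) := by
      have : ∀ m, (cesMat M (φ m) * M) i j = ∑ k, cesMat M (φ m) i k * M k j := by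
        intro m; rw [Matrix.mul_apply]
      simp only [this]
      rw [Matrix.mul_apply]
      exact tendsto_finset_sum _ fun k _ => (hsub i k).mul_const (M k j)
    exact tendsto_nhds_unique h1 (hAMsub i j)
  -- M * Q = Q
  have hMQ : M * Q = Q := by
    ext i j
    have hcomm : ∀ N, M * cesMat M N = cesMat M N * M := by
      intro N
      have := pow_mul_cesMat M N 1
      rwa [pow_one] at this
    have h1 : Tendsto (fun m => (M * cesMat M (φ m)) i j) atTop (𝓝 ((M * Q) i j)) := by
      have : ∀ m, (M * cesMat M (φ m)) i j = ∑ k, M i k * cesMat M (φ m) k j := by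
        intro m; rw [Matrix.mul_apply]
      simp only [this]
      rw [Matrix.mul_apply]
      exact tendsto_finset_sum _ fun k _ => (hsub k j).const_mul (M i k)
    have h2 : Tendsto (fun m => (M * cesMat M (φ m)) i j) atTop (𝓝 (Q i j)) := by
      simp only [fun m => congrFun (congrFun (hcomm (φ m)) i) j]
      exact hAMsub i j
    exact tendsto_nhds_unique h1 h2
  -- Q is stochastic
  have hQ0 : ∀ i j, 0 ≤ Q i j := by
    intro i j
    exact ge_of_tendsto (hsub i j) (Eventually.of_forall fun m => cesMat_nonneg hM (φ m) i j)
  have hQrow : ∀ i, ∑ j, Q i j = 1 := by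
    intro i
    have h1 : Tendsto (fun m => ∑ j, cesMat M (φ m) i j) atTop (𝓝 (∑ j, Q i j)) :=
      tendsto_finset_sum _ fun j _ => hsub i j
    have h2 : Tendsto (fun m => ∑ j, cesMat M (φ m) i j) atTop (𝓝 1) := by
      apply Tendsto.congr' _ tendsto_const_nhds
      filter_upwards [eventually_ge_atTop 1] with m hm
      exact (cesMat_rowsum hM (le_trans hm (hφm m)) i).symm
    exact tendsto_nhds_unique h1 h2
  refine ⟨Q, ⟨hQ0, hQrow⟩, hMQ, hQM, ?_⟩
  -- main convergence
  intro i j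
  rw [Metric.tendsto_atTop]
  intro ε hε
  -- choose a good element of the subsequence
  obtain ⟨m₀, hm₀⟩ := Metric.tendsto_atTop.mp hconv (ε/4) (by positivity)
  set m := max m₀ 1 with hmdef
  set k := φ m with hkdef
  have hk1 : 1 ≤ k := le_trans (le_max_right m₀ 1) (hφm m)
  have hdist : ∀ l j', |cesMat M k l j' - Q l j'| ≤ ε/4 := by
    intro l j'
    have h1 := hm₀ m (le_max_left m₀ 1)
    have h2 : dist (cesMat M k l j') (Q l j') ≤ dist ((fun i j => cesMat M (φ m) i j)) Qf := by
      have ha : dist (cesMat M k l j') (Qf l j')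
          ≤ dist ((fun i j => cesMat M (φ m) i j) l) (Qf l) :=
        dist_le_pi_dist (X := fun _ : S => ℝ) ((fun i j => cesMat M (φ m) i j) l) (Qf l) j'
      have hb : dist ((fun i j => cesMat M (φ m) i j) l) (Qf l)
          ≤ dist ((fun i j => cesMat M (φ m) i j)) Qf :=
        dist_le_pi_dist (X := fun _ : S => S → ℝ) _ Qf l
      exact le_trans ha hb
    rw [Real.dist_eq] at h2
    have := le_trans h2 (le_of_lt h1)
    linarith
  obtain ⟨N₁, hN₁⟩ : ∃ N₁ : ℕ, (2 * k : ℝ)/ε < N₁ := by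
    obtain ⟨N₁, hN₁⟩ := exists_nat_gt ((2 * k : ℝ)/ε)
    exact ⟨N₁, hN₁⟩
  refine ⟨max N₁ 1, fun N hN => ?_⟩
  have hNge1 : 1 ≤ N := le_trans (le_max_right N₁ 1) hN
  have hN0 : (0:ℝ) < N := by exact_mod_cast hNge1
  have hterm1 : |cesMat M N i j - (cesMat M N * cesMat M k) i j| ≤ (k:ℝ)/N := by
    rw [abs_sub_comm]
    exact avg_entry_bound hM N hk1 i j
  have hterm1' : (k:ℝ)/N < ε/2 := by
    have hNN₁ : (N₁:ℝ) ≤ N := by exact_mod_cast le_trans (le_max_left N₁ 1) hN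
    have h2k : (2 * k : ℝ)/ε < N := lt_of_lt_of_le hN₁ hNN₁
    have h2k' : (2*k:ℝ) < N * ε := (div_lt_iff₀ hε).mp h2k
    rw [div_lt_iff₀ hN0]
    nlinarith
  have hterm3 : cesMat M N * Q = Q := cesMat_mul_eq_self hMQ hNge1
  have hterm2 : |(cesMat M N * cesMat M k) i j - (cesMat M N * Q) i j| ≤ ε/4 := by
    have expand : (cesMat M N * cesMat M k) i j - (cesMat M N * Q) i j
        = ∑ l, cesMat M N i l * (cesMat M k l j - Q l j) := by
      rw [Matrix.mul_apply, Matrix.mul_apply, ← Finset.sum_sub_distrib]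
      exact Finset.sum_congr rfl fun l _ => (mul_sub _ _ _).symm
    rw [expand]
    calc |∑ l, cesMat M N i l * (cesMat M k l j - Q l j)|
        ≤ ∑ l, |cesMat M N i l * (cesMat M k l j - Q l j)| := Finset.abs_sum_le_sum_abs _ _
    _ ≤ ∑ l, cesMat M N i l * (ε/4) := by
        apply Finset.sum_le_sum
        intro l _
        rw [abs_mul, abs_of_nonneg (cesMat_nonneg hM N i l)]
        exact mul_le_mul_of_nonneg_left (hdist l j) (cesMat_nonneg hM N i l)
    _ = (∑ l, cesMat M N i l) * (ε/4) := by rw [Finset.sum_mul]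
    _ = ε/4 := by rw [cesMat_rowsum hM hNge1, one_mul]
  rw [Real.dist_eq]
  have habc : |cesMat M N i j - Q i j|
      ≤ |cesMat M N i j - (cesMat M N * cesMat M k) i j|
        + |(cesMat M N * cesMat M k) i j - (cesMat M N * Q) i j| := by
    have h3 : (cesMat M N * Q) i j = Q i j := by rw [hterm3]
    calc |cesMat M N i j - Q i j|
        ≤ |cesMat M N i j - (cesMat M N * cesMat M k) i j|
          + |(cesMat M N * cesMat M k) i j - Q i j| := abs_sub_le _ _ _
    _ = |cesMat M N i j - (cesMat M N * cesMat M k) i j|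
          + |(cesMat M N * cesMat M k) i j - (cesMat M N * Q) i j| := by rw [h3]
  linarith [hterm1, hterm1', hterm2, habc]

/-- Package for the Cesàro limit matrix of a stochastic matrix. -/
structure CesLim (M Q : Matrix S S ℝ) : Prop where
  stoch : Stoch Q
  left : M * Q = Q
  right : Q * M = Q
  tends : ∀ i j, Tendsto (fun N => cesMat M N i j) atTop (𝓝 (Q i j))

lemma exists_cesLim {M : Matrix S S ℝ} (hM : Stoch M) : ∃ Q, CesLim M Q := by
  obtain ⟨Q, h1, h2, h3, h4⟩ := exists_cesaro_limit hM
  exact ⟨Q, h1, h2, h3, h4⟩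

lemma CesLim.idem {M Q : Matrix S S ℝ} (h : CesLim M Q) : Q * Q = Q := by
  ext i j
  have h1 : Tendsto (fun N => (Q * cesMat M N) i j) atTop (𝓝 ((Q * Q) i j)) := by
    have : ∀ N, (Q * cesMat M N) i j = ∑ k, Q i k * cesMat M N k j := fun N => Matrix.mul_apply
    simp only [this]
    rw [Matrix.mul_apply]
    exact tendsto_finset_sum _ fun k _ => (h.tends k j).const_mul (Q i k)
  have h2 : Tendsto (fun N => (Q * cesMat M N) i j) atTop (𝓝 (Q i j)) := by
    apply Tendsto.congr' _ tendsto_const_nhds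
    filter_upwards [eventually_ge_atTop 1] with N hN
    have : Q * cesMat M N = Q := by
      have e0 : cesMat M N = (N:ℝ)⁻¹ • ∑ u ∈ Finset.range N, M ^ u := rfl
      rw [e0, Matrix.mul_smul, Matrix.mul_sum]
      rw [Finset.sum_congr rfl fun t _ => mul_pow_eq_self h.right t, Finset.sum_const,
        Finset.card_range]
      have hN0 : (N:ℝ) ≠ 0 := by positivity
      rw [← Nat.cast_smul_eq_nsmul ℝ, smul_smul, inv_mul_cancel₀ hN0, one_smul]
    rw [this]
  exact tendsto_nhds_unique h1 h2

/-- Cesàro limits of the vector sequence `M^t *ᵥ v`. -/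
lemma CesLim.cesaro_vec {M Q : Matrix S S ℝ} (h : CesLim M Q) (v : S → ℝ) :
    cesaro (fun t => M ^ t *ᵥ v) = Q *ᵥ v := by
  apply Filter.Tendsto.limUnder_eq
  rw [tendsto_pi_nhds]
  intro s
  have key : ∀ N : ℕ, ((N : ℝ)⁻¹ • ∑ T ∈ Finset.range N, M ^ T *ᵥ v) s
      = ∑ j, cesMat M N s j * v j := by
    intro N
    have e1 : ((N : ℝ)⁻¹ • ∑ T ∈ Finset.range N, M ^ T *ᵥ v) s
        = (N:ℝ)⁻¹ * ∑ T ∈ Finset.range N, ∑ j, (M ^ T) s j * v j := by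
      simp [Matrix.mulVec, dotProduct, Finset.sum_apply]
    rw [e1, Finset.sum_comm]
    rw [Finset.mul_sum]
    apply Finset.sum_congr rfl
    intro j _
    rw [cesMat_entry, ← Finset.sum_mul]
    ring
  simp only [key]
  have : (Q *ᵥ v) s = ∑ j, Q s j * v j := rfl
  rw [this]
  exact tendsto_finset_sum _ fun j _ => ((h.tends s j).mul_const (v j))

lemma CesLim.cesaro_vec' {M Q : Matrix S S ℝ} (h : CesLim M Q) (v : S → ℝ) :
    Tendsto (fun N : ℕ => (N : ℝ)⁻¹ • ∑ T ∈ Finset.range N, M ^ T *ᵥ v) atTop (𝓝 (Q *ᵥ v)) := by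
  rw [tendsto_pi_nhds]
  intro s
  have key : ∀ N : ℕ, ((N : ℝ)⁻¹ • ∑ T ∈ Finset.range N, M ^ T *ᵥ v) s
      = ∑ j, cesMat M N s j * v j := by
    intro N
    have e1 : ((N : ℝ)⁻¹ • ∑ T ∈ Finset.range N, M ^ T *ᵥ v) s
        = (N:ℝ)⁻¹ * ∑ T ∈ Finset.range N, ∑ j, (M ^ T) s j * v j := by
      simp [Matrix.mulVec, dotProduct, Finset.sum_apply]
    rw [e1, Finset.sum_comm]
    rw [Finset.mul_sum]
    apply Finset.sum_congr rfl
    intro j _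
    rw [cesMat_entry, ← Finset.sum_mul]
    ring
  simp only [key]
  have : (Q *ᵥ v) s = ∑ j, Q s j * v j := rfl
  rw [this]
  exact tendsto_finset_sum _ fun j _ => ((h.tends s j).mul_const (v j))

lemma sum_mulVec' {X : ℕ → Matrix S S ℝ} {N : ℕ} (v : S → ℝ) :
    (∑ t ∈ Finset.range N, X t) *ᵥ v = ∑ t ∈ Finset.range N, (X t *ᵥ v) := by
  induction N with
  | zero => simp [Matrix.zero_mulVec]
  | succ n ih => rw [Finset.sum_range_succ, Finset.sum_range_succ, Matrix.add_mulVec, ih]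

lemma CesLim.pow_sub {M Q : Matrix S S ℝ} (h : CesLim M Q) :
    ∀ t, 1 ≤ t → (M - Q) ^ t = M ^ t - Q := by
  intro t ht
  induction t with
  | zero => omega
  | succ n ih =>
    rcases Nat.eq_zero_or_pos n with h0 | h0
    · subst h0; simp
    · rw [pow_succ, ih h0, Matrix.sub_mul, Matrix.mul_sub, Matrix.mul_sub,
        pow_mul_eq_self h.left n, ← pow_succ, h.right, h.idem]
      abel

/-- Entrywise convergence of `cesMat M N * M` to `Q`. -/
lemma CesLim.tendsM {M Q : Matrix S S ℝ} (h : CesLim M Q) (i j : S) :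
    Tendsto (fun N => (cesMat M N * M) i j) atTop (𝓝 (Q i j)) := by
  have h1 : Tendsto (fun N => (cesMat M N * M) i j) atTop (𝓝 ((Q * M) i j)) := by
    have : ∀ N, (cesMat M N * M) i j = ∑ k, cesMat M N i k * M k j := fun N => Matrix.mul_apply
    simp only [this]
    rw [Matrix.mul_apply]
    exact tendsto_finset_sum _ fun k _ => (h.tends i k).mul_const (M k j)
  rwa [h.right] at h1

lemma CesLim.det_unit {M Q : Matrix S S ℝ} (h : CesLim M Q) : IsUnit (1 - M + Q).det := by
  rw [isUnit_iff_ne_zero]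
  intro hdet
  obtain ⟨v, hv0, hv⟩ := Matrix.exists_mulVec_eq_zero_iff.mpr hdet
  have hstep : (M - Q) *ᵥ v = v := by
    have e : (1 - M + Q) *ᵥ v = v - (M - Q) *ᵥ v := by
      rw [Matrix.add_mulVec, Matrix.sub_mulVec, Matrix.sub_mulVec, Matrix.one_mulVec]
      abel
    rw [hv] at e
    have e2 := e.symm
    rwa [sub_eq_zero, eq_comm] at e2
  have hpow' : ∀ t : ℕ, (M - Q) ^ (t + 1) *ᵥ v = v := by
    intro t
    induction t with
    | zero => simpa using hstep
    | succ n ih =>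
      rw [pow_succ', ← Matrix.mulVec_mulVec, ih, hstep]
  have hpow : ∀ t : ℕ, 1 ≤ t → (M ^ t - Q) *ᵥ v = v := by
    intro t ht
    cases t with
    | zero => omega
    | succ n =>
      rw [← h.pow_sub (n+1) (Nat.succ_le_succ (Nat.zero_le n))]
      exact hpow' n
  have hNv : ∀ N : ℕ, 1 ≤ N → (cesMat M N * M - Q) *ᵥ v = v := by
    intro N hN
    have hN0 : (N:ℝ) ≠ 0 := by positivity
    have hsum1 : ∑ t ∈ Finset.range N, ((M ^ (t+1) - Q) *ᵥ v) = (N:ℕ) • v := by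
      rw [Finset.sum_congr rfl fun t _ => hpow (t+1) t.succ_pos, Finset.sum_const,
        Finset.card_range]
    have hsum2 : ∑ t ∈ Finset.range N, (M ^ (t+1) - Q) = (N:ℝ) • (cesMat M N * M - Q) := by
      have e1 : ∑ t ∈ Finset.range N, M ^ (t+1) = (N:ℝ) • (cesMat M N * M) := by
        have := cesMat_mul_pow M N 1
        rw [pow_one] at this
        rw [this, smul_smul, mul_inv_cancel₀ hN0, one_smul]
      rw [Finset.sum_sub_distrib, e1, Finset.sum_const, Finset.card_range, smul_sub,
        ← Nat.cast_smul_eq_nsmul ℝ]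
    have : ((N:ℝ) • (cesMat M N * M - Q)) *ᵥ v = (N:ℕ) • v := by
      rw [← hsum2, sum_mulVec', hsum1]
    rw [Matrix.smul_mulVec, ← Nat.cast_smul_eq_nsmul ℝ] at this
    exact smul_right_injective (S → ℝ) hN0 this
  obtain ⟨s, hs⟩ := Function.ne_iff.mp hv0
  have hF : Tendsto (fun N => ((cesMat M N * M - Q) *ᵥ v) s) atTop (𝓝 0) := by
    have e : ∀ N, ((cesMat M N * M - Q) *ᵥ v) s
        = (∑ j, (cesMat M N * M) s j * v j) - (Q *ᵥ v) s := by
      intro N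
      rw [Matrix.sub_mulVec]
      rfl
    simp only [e]
    have h1 : Tendsto (fun N => ∑ j, (cesMat M N * M) s j * v j) atTop (𝓝 ((Q *ᵥ v) s)) := by
      have : (Q *ᵥ v) s = ∑ j, Q s j * v j := rfl
      rw [this]
      exact tendsto_finset_sum _ fun j _ => (h.tendsM s j).mul_const (v j)
    have := h1.sub (tendsto_const_nhds (x := (Q *ᵥ v) s))
    simpa using this
  have hG : Tendsto (fun N => ((cesMat M N * M - Q) *ᵥ v) s) atTop (𝓝 (v s)) := by
    apply Tendsto.congr' _ tendsto_const_nhds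
    filter_upwards [eventually_ge_atTop 1] with N hN
    rw [hNv N hN]
  exact hs (tendsto_nhds_unique hG hF)

lemma CesLim.Q_mul_R {M Q : Matrix S S ℝ} (h : CesLim M Q) : Q * (1 - M + Q) = Q := by
  rw [Matrix.mul_add, Matrix.mul_sub, Matrix.mul_one, h.right, h.idem]
  abel

lemma CesLim.R_mul_Q {M Q : Matrix S S ℝ} (h : CesLim M Q) : (1 - M + Q) * Q = Q := by
  rw [Matrix.add_mul, Matrix.sub_mul, Matrix.one_mul, h.left, h.idem]
  abel

lemma CesLim.Q_mul_Rinv {M Q : Matrix S S ℝ} (h : CesLim M Q) : Q * (1 - M + Q)⁻¹ = Q := by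
  calc Q * (1 - M + Q)⁻¹ = (Q * (1 - M + Q)) * (1 - M + Q)⁻¹ := by rw [h.Q_mul_R]
  _ = Q * ((1 - M + Q) * (1 - M + Q)⁻¹) := by rw [mul_assoc]
  _ = Q := by rw [Matrix.mul_nonsing_inv _ h.det_unit, mul_one]

lemma CesLim.Rinv_mul_Q {M Q : Matrix S S ℝ} (h : CesLim M Q) : (1 - M + Q)⁻¹ * Q = Q := by
  calc (1 - M + Q)⁻¹ * Q = (1 - M + Q)⁻¹ * ((1 - M + Q) * Q) := by rw [h.R_mul_Q]
  _ = ((1 - M + Q)⁻¹ * (1 - M + Q)) * Q := by rw [mul_assoc]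
  _ = Q := by rw [Matrix.nonsing_inv_mul _ h.det_unit, one_mul]

lemma CesLim.geom {M Q : Matrix S S ℝ} (h : CesLim M Q) (T : ℕ) :
    ∑ t ∈ Finset.range T, (M - Q) ^ t = (1 - M + Q)⁻¹ * (1 - (M - Q) ^ T) := by
  have e1 : (1 - M + Q) * ∑ t ∈ Finset.range T, (M - Q) ^ t = 1 - (M - Q) ^ T := by
    have := mul_geom_sum (M - Q) T
    have e : (1 : Matrix S S ℝ) - M + Q = -((M - Q) - 1) := by abel
    rw [e, Matrix.neg_mul, this]
    abel
  calc ∑ t ∈ Finset.range T, (M - Q) ^ t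
      = ((1 - M + Q)⁻¹ * (1 - M + Q)) * ∑ t ∈ Finset.range T, (M - Q) ^ t := by
        rw [Matrix.nonsing_inv_mul _ h.det_unit, one_mul]
  _ = (1 - M + Q)⁻¹ * (1 - (M - Q) ^ T) := by rw [mul_assoc, e1]

lemma CesLim.sMat_eq {M Q : Matrix S S ℝ} (h : CesLim M Q) (T : ℕ) :
    ∑ t ∈ Finset.range T, (M ^ t - Q)
      = ((1 - M + Q)⁻¹ - Q) - (1 - M + Q)⁻¹ * (M ^ T - Q) := by
  rcases Nat.eq_zero_or_pos T with h0 | h0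
  · subst h0
    simp only [Finset.range_zero, Finset.sum_empty, pow_zero]
    rw [Matrix.mul_sub, Matrix.mul_one, h.Rinv_mul_Q]
    abel
  · have e1 : ∑ t ∈ Finset.range T, (M ^ t - Q) = (∑ t ∈ Finset.range T, (M - Q) ^ t) - Q := by
      have e2 : ∑ t ∈ Finset.range T, ((M ^ t - Q) - (M - Q) ^ t) = -Q := by
        rw [Finset.sum_eq_single 0]
        · simp
        · intro t _ ht
          rw [h.pow_sub t (Nat.one_le_iff_ne_zero.mpr ht), sub_self]
        · intro habs
          exact absurd (Finset.mem_range.mpr h0) habs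
      have e3 : ∑ t ∈ Finset.range T, ((M ^ t - Q) - (M - Q) ^ t)
          = ∑ t ∈ Finset.range T, (M ^ t - Q) - ∑ t ∈ Finset.range T, (M - Q) ^ t :=
        Finset.sum_sub_distrib ..
      rw [e3] at e2
      have := sub_eq_iff_eq_add.mp e2
      rw [this]
      abel
    rw [e1, h.geom, h.pow_sub T h0, Matrix.mul_sub, Matrix.mul_one]
    abel

lemma CesLim.cesaro_sMat_tendsto {M Q : Matrix S S ℝ} (h : CesLim M Q) (i j : S) :
    Tendsto (fun N : ℕ => ((N:ℝ)⁻¹ • ∑ T ∈ Finset.range N, ∑ t ∈ Finset.range T, (M ^ t - Q)) i j)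
      atTop (𝓝 (((1 - M + Q)⁻¹ - Q) i j)) := by
  set Rinv : Matrix S S ℝ := (1 - M + Q)⁻¹ with hRinv
  have key : ∀ N : ℕ, 1 ≤ N →
      (N:ℝ)⁻¹ • ∑ T ∈ Finset.range N, ∑ t ∈ Finset.range T, (M ^ t - Q)
      = (Rinv - Q) - Rinv * (cesMat M N - Q) := by
    intro N hN
    have hN0 : (N:ℝ) ≠ 0 := by positivity
    have e1 : ∑ T ∈ Finset.range N, ∑ t ∈ Finset.range T, (M ^ t - Q)
        = (N:ℕ) • (Rinv - Q) - Rinv * ∑ T ∈ Finset.range N, (M ^ T - Q) := by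
      rw [Finset.sum_congr rfl fun T _ => h.sMat_eq T, Finset.sum_sub_distrib,
        Finset.sum_const, Finset.card_range, ← Matrix.mul_sum]
    have e2 : ∑ T ∈ Finset.range N, (M ^ T - Q) = (N:ℝ) • (cesMat M N - Q) := by
      rw [Finset.sum_sub_distrib, Finset.sum_const, Finset.card_range, smul_sub]
      congr 1
      · rw [cesMat, smul_smul, mul_inv_cancel₀ hN0, one_smul]
      · rw [← Nat.cast_smul_eq_nsmul ℝ]
    rw [e1, e2, ← Nat.cast_smul_eq_nsmul ℝ, Matrix.mul_smul, smul_sub, smul_smul,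
      inv_mul_cancel₀ hN0, one_smul, smul_smul, inv_mul_cancel₀ hN0, one_smul]
  have htail : Tendsto (fun N => ((Rinv - Q) - Rinv * (cesMat M N - Q)) i j) atTop
      (𝓝 ((Rinv - Q) i j)) := by
    have e : ∀ N, ((Rinv - Q) - Rinv * (cesMat M N - Q)) i j
        = (Rinv - Q) i j - ∑ k, Rinv i k * (cesMat M N k j - Q k j) := by
      intro N
      rw [Matrix.sub_apply, Matrix.mul_apply]
      rfl
    simp only [e]
    have h2 : Tendsto (fun N => ∑ k, Rinv i k * (cesMat M N k j - Q k j)) atTop (𝓝 0) := by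
      have h3 : Tendsto (fun N => ∑ k, Rinv i k * (cesMat M N k j - Q k j)) atTop
          (𝓝 (∑ k : S, Rinv i k * (Q k j - Q k j))) := by
        apply tendsto_finset_sum
        intro k _
        exact (((h.tends k j).sub tendsto_const_nhds)).const_mul (Rinv i k)
      simpa using h3
    simpa using (tendsto_const_nhds (x := (Rinv - Q) i j)).sub h2
  apply Tendsto.congr' _ htail
  filter_upwards [eventually_ge_atTop 1] with N hN
  rw [key N hN]

/-- Identification of the bias vector. -/
lemma CesLim.bias_vec {M Q : Matrix S S ℝ} (h : CesLim M Q) (v : S → ℝ) :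
    cesaro (fun T => ∑ t ∈ Finset.range T, (M ^ t *ᵥ v - Q *ᵥ v))
      = ((1 - M + Q)⁻¹ - Q) *ᵥ v := by
  apply Filter.Tendsto.limUnder_eq
  rw [tendsto_pi_nhds]
  intro s
  have e : ∀ N : ℕ, ((N:ℝ)⁻¹ • ∑ T ∈ Finset.range N,
        ∑ t ∈ Finset.range T, (M ^ t *ᵥ v - Q *ᵥ v)) s
      = ∑ j, ((N:ℝ)⁻¹ • ∑ T ∈ Finset.range N, ∑ t ∈ Finset.range T, (M ^ t - Q)) s j * v j := by
    intro N
    have e1 : ∑ T ∈ Finset.range N, ∑ t ∈ Finset.range T, (M ^ t *ᵥ v - Q *ᵥ v)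
        = (∑ T ∈ Finset.range N, ∑ t ∈ Finset.range T, (M ^ t - Q)) *ᵥ v := by
      rw [sum_mulVec']
      apply Finset.sum_congr rfl
      intro T _
      rw [sum_mulVec']
      exact Finset.sum_congr rfl fun t _ => by rw [Matrix.sub_mulVec]
    rw [e1, ← Matrix.smul_mulVec]
    rfl
  simp only [e]
  have etarget : (((1 - M + Q)⁻¹ - Q) *ᵥ v) s = ∑ j, ((1 - M + Q)⁻¹ - Q) s j * v j := rfl
  rw [etarget]
  exact tendsto_finset_sum _ fun j _ => (h.cesaro_sMat_tendsto s j).mul_const (v j)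

section DvalSec
variable {γ : ℝ} {M : Matrix S S ℝ}

lemma stoch_mulVec_abs_le {M : Matrix S S ℝ} (hM : Stoch M) (z : S → ℝ) (s : S) :
    |(M *ᵥ z) s| ≤ ‖z‖ := by
  rw [abs_le]
  constructor
  · apply hM.le_mulVec
    intro j
    have := norm_le_pi_norm z j
    rw [Real.norm_eq_abs] at this
    linarith [neg_abs_le (z j)]
  · apply hM.mulVec_le
    intro j
    have := norm_le_pi_norm z j
    rw [Real.norm_eq_abs] at this
    linarith [le_abs_self (z j)]

lemma summable_coord (hM : Stoch M) (hγ0 : 0 ≤ γ) (hγ1 : γ < 1) (v : S → ℝ) (s : S) :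
    Summable (fun t : ℕ => γ ^ t * ((M ^ t *ᵥ v) s)) := by
  apply Summable.of_nonneg_of_le (g := fun t : ℕ => |γ ^ t * ((M ^ t *ᵥ v) s)|)
    (fun t => abs_nonneg _) (fun t => ?_)
    ((summable_geometric_of_lt_one hγ0 hγ1).mul_right ‖v‖) |>.of_abs
  show |γ ^ t * ((M ^ t *ᵥ v) s)| ≤ γ ^ t * ‖v‖
  rw [abs_mul, abs_pow, abs_of_nonneg hγ0]
  exact mul_le_mul_of_nonneg_left (stoch_mulVec_abs_le (hM.pow t) v s) (pow_nonneg hγ0 t)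

lemma summable_pi (hM : Stoch M) (hγ0 : 0 ≤ γ) (hγ1 : γ < 1) (v : S → ℝ) :
    Summable (fun t : ℕ => γ ^ t • (M ^ t *ᵥ v)) := by
  rw [Pi.summable]
  intro s
  exact (summable_coord hM hγ0 hγ1 v s).congr fun t => rfl

lemma resApply_coord (hM : Stoch M) (hγ0 : 0 ≤ γ) (hγ1 : γ < 1) (v : S → ℝ) (s : S) :
    resApply γ M v s = ∑' t : ℕ, γ ^ t * ((M ^ t *ᵥ v) s) := by
  rw [resApply, tsum_apply (summable_pi hM hγ0 hγ1 v)]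
  exact tsum_congr fun t => rfl

lemma resApply_bellman (hM : Stoch M) (hγ0 : 0 ≤ γ) (hγ1 : γ < 1) (v : S → ℝ) :
    resApply γ M v = v + γ • (M *ᵥ resApply γ M v) := by
  classical
  have hsum := summable_pi hM hγ0 hγ1 v
  have h0 : resApply γ M v
      = γ ^ 0 • (M ^ 0 *ᵥ v) + ∑' t : ℕ, γ ^ (t+1) • (M ^ (t+1) *ᵥ v) :=
    Summable.tsum_eq_zero_add hsum
  have hF0 : γ ^ 0 • (M ^ 0 *ᵥ v) = v := by
    rw [pow_zero, pow_zero, Matrix.one_mulVec, one_smul]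
  have hterm : ∀ t : ℕ, γ ^ (t+1) • (M ^ (t+1) *ᵥ v)
      = γ • (M *ᵥ (γ ^ t • (M ^ t *ᵥ v))) := by
    intro t
    rw [Matrix.mulVec_smul, Matrix.mulVec_mulVec, ← pow_succ', smul_smul, ← pow_succ']
  let L : (S → ℝ) →L[ℝ] (S → ℝ) := LinearMap.toContinuousLinearMap (Matrix.mulVecLin M)
  have hLsum : HasSum (fun t : ℕ => L (γ ^ t • (M ^ t *ᵥ v))) (L (resApply γ M v)) :=
    hsum.hasSum.mapL L
  have hLs : HasSum (fun t : ℕ => γ • L (γ ^ t • (M ^ t *ᵥ v))) (γ • L (resApply γ M v)) :=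
    hLsum.const_smul γ
  have hLapp : ∀ w : S → ℝ, L w = M *ᵥ w := fun w => rfl
  have htail : ∑' t : ℕ, γ ^ (t+1) • (M ^ (t+1) *ᵥ v) = γ • (M *ᵥ resApply γ M v) := by
    rw [tsum_congr hterm]
    have := hLs.tsum_eq
    simp only [hLapp] at this ⊢
    exact this
  conv_lhs => rw [h0]
  rw [hF0, htail]

lemma le_resApply_of_subinvariant (hM : Stoch M) (hγ0 : 0 ≤ γ) (hγ1 : γ < 1) (v : S → ℝ)
    {W : S → ℝ} (hW : ∀ s, W s ≤ v s + γ * ((M *ᵥ W) s)) :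
    ∀ s, W s ≤ resApply γ M v s := by
  set V := resApply γ M v with hV
  have hB := resApply_bellman hM hγ0 hγ1 v
  set z : S → ℝ := fun s => V s - W s with hzdef
  have hz : ∀ s, γ * ((M *ᵥ z) s) ≤ z s := by
    intro s
    have hVs : V s = v s + γ * ((M *ᵥ V) s) := congrFun hB s
    have hMz : (M *ᵥ z) s = (M *ᵥ V) s - (M *ᵥ W) s := by
      have : z = V - W := rfl
      rw [this, Matrix.mulVec_sub]
      rfl
    have h2 := hW s
    have h3 : z s = V s - W s := rfl
    rw [hMz, h3, hVs]
    nlinarith [hγ0]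
  have hiter : ∀ t : ℕ, ∀ s, γ ^ t * ((M ^ t *ᵥ z) s) ≤ z s := by
    intro t
    induction t with
    | zero =>
      intro s
      simp [Matrix.one_mulVec]
    | succ n ih =>
      intro s
      have h1 : (M ^ n *ᵥ (fun s' => γ * ((M *ᵥ z) s'))) s ≤ (M ^ n *ᵥ z) s :=
        (hM.pow n).mulVec_mono hz s
      have h2 : (M ^ n *ᵥ (fun s' => γ * ((M *ᵥ z) s'))) s = γ * ((M ^ (n+1) *ᵥ z) s) := by
        have e : (fun s' => γ * ((M *ᵥ z) s')) = γ • (M *ᵥ z) := rfl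
        rw [e, Matrix.mulVec_smul, Matrix.mulVec_mulVec, ← pow_succ]
        rfl
      calc γ ^ (n+1) * ((M ^ (n+1) *ᵥ z) s) = γ ^ n * (γ * ((M ^ (n+1) *ᵥ z) s)) := by ring
      _ = γ ^ n * ((M ^ n *ᵥ (fun s' => γ * ((M *ᵥ z) s'))) s) := by rw [h2]
      _ ≤ γ ^ n * ((M ^ n *ᵥ z) s) := mul_le_mul_of_nonneg_left h1 (pow_nonneg hγ0 n)
      _ ≤ z s := ih s
  intro s
  by_contra hneg
  push_neg at hneg
  have hzs : z s < 0 := by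
    have : z s = V s - W s := rfl
    rw [this]
    linarith
  have hzbound : ∀ t : ℕ, -(γ ^ t * ‖z‖) ≤ z s := by
    intro t
    have h1 : -‖z‖ ≤ (M ^ t *ᵥ z) s := by
      have := stoch_mulVec_abs_le (hM.pow t) z s
      rw [abs_le] at this
      exact this.1
    calc -(γ ^ t * ‖z‖) = γ ^ t * (-‖z‖) := by ring
    _ ≤ γ ^ t * ((M ^ t *ᵥ z) s) := mul_le_mul_of_nonneg_left h1 (pow_nonneg hγ0 t)
    _ ≤ z s := hiter t s
  have htend : Tendsto (fun t : ℕ => γ ^ t * ‖z‖) atTop (𝓝 0) := by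
    have := (tendsto_pow_atTop_nhds_zero_of_lt_one hγ0 hγ1).mul_const ‖z‖
    simpa using this
  have hev : ∀ᶠ t : ℕ in atTop, γ ^ t * ‖z‖ < -(z s) := by
    apply htend.eventually_lt_const
    linarith
  obtain ⟨t, ht⟩ := hev.exists
  linarith [hzbound t]

lemma resApply_le_of_superinvariant (hM : Stoch M) (hγ0 : 0 ≤ γ) (hγ1 : γ < 1) (v : S → ℝ)
    {W : S → ℝ} (hW : ∀ s, v s + γ * ((M *ᵥ W) s) ≤ W s) :
    ∀ s, resApply γ M v s ≤ W s := by
  have hneg : ∀ s, (-W) s ≤ (-v) s + γ * ((M *ᵥ (-W)) s) := by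
    intro s
    have e : (M *ᵥ (-W)) s = -((M *ᵥ W) s) := by
      rw [show (-W : S → ℝ) = (0 : S → ℝ) - W by abel, Matrix.mulVec_sub]
      simp [Matrix.mulVec_zero]
    rw [e]
    have := hW s
    simp only [Pi.neg_apply]
    linarith
  have h1 := le_resApply_of_subinvariant hM hγ0 hγ1 (-v) hneg
  have h2 : resApply γ M (-v) = -resApply γ M v := by
    funext s
    rw [Pi.neg_apply, resApply_coord hM hγ0 hγ1 _ s, resApply_coord hM hγ0 hγ1 v s]
    have e : ∀ t : ℕ, γ ^ t * ((M ^ t *ᵥ (-v)) s) = -(γ ^ t * ((M ^ t *ᵥ v) s)) := by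
      intro t
      have : (M ^ t *ᵥ (-v)) = -(M ^ t *ᵥ v) := by
        rw [show (-v : S → ℝ) = (0 : S → ℝ) - v by abel, Matrix.mulVec_sub]
        simp [Matrix.mulVec_zero]
      rw [this]
      simp only [Pi.neg_apply]
      ring
    rw [tsum_congr e, tsum_neg]
  intro s
  have := h1 s
  rw [h2] at this
  simp only [Pi.neg_apply] at this
  linarith

end DvalSec

section ExpandSec
variable {γ : ℝ} {M Q : Matrix S S ℝ}

lemma CesLim.eval_eq (h : CesLim M Q) (v : S → ℝ) (s : S) :
    v s = (Q *ᵥ v) s + (((1 - M + Q)⁻¹ - Q) *ᵥ v) s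
      - (M *ᵥ (((1 - M + Q)⁻¹ - Q) *ᵥ v)) s := by
  have hmat : (1 - M) * ((1 - M + Q)⁻¹ - Q) = 1 - Q := by
    have e : (1 - M) * ((1 - M + Q)⁻¹ - Q)
        = (1 - M + Q) * ((1 - M + Q)⁻¹ - Q) - Q * ((1 - M + Q)⁻¹ - Q) := by
      rw [← Matrix.sub_mul]
      congr 1
      abel
    rw [e, Matrix.mul_sub, Matrix.mul_sub, Matrix.mul_nonsing_inv _ h.det_unit,
      h.R_mul_Q, h.Q_mul_Rinv, h.idem]
    abel
  have h2 : ((1:Matrix S S ℝ) - M) *ᵥ (((1 - M + Q)⁻¹ - Q) *ᵥ v)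
      = ((1:Matrix S S ℝ) - Q) *ᵥ v := by
    rw [Matrix.mulVec_mulVec, hmat]
  simp only [Matrix.sub_mulVec, Matrix.one_mulVec] at h2 ⊢
  have h2c := congrFun h2 s
  simp only [Pi.sub_apply] at h2c ⊢
  linarith

lemma resApply_sandwich (hM : Stoch M) (h : CesLim M Q) (hγ0 : 0 ≤ γ) (hγ1 : γ < 1)
    (v : S → ℝ) (s : S) :
    (1-γ)⁻¹ * ((Q *ᵥ v) s) - span (((1 - M + Q)⁻¹ - Q) *ᵥ v) ≤ resApply γ M v s
    ∧ resApply γ M v s ≤ (1-γ)⁻¹ * ((Q *ᵥ v) s) + span (((1 - M + Q)⁻¹ - Q) *ᵥ v) := by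
  set hb : S → ℝ := ((1 - M + Q)⁻¹ - Q) *ᵥ v with hbdef
  set ρ : S → ℝ := Q *ᵥ v with ρdef
  have h1γ : (1-γ) ≠ 0 := by linarith
  have hMρ : M *ᵥ ρ = ρ := by rw [ρdef, Matrix.mulVec_mulVec, h.left]
  have hsup_b : BddAbove (Set.range hb) := Finite.bddAbove_range hb
  have hinf_b : BddBelow (Set.range hb) := Finite.bddBelow_range hb
  have hspan : span hb = (⨆ x, hb x) - ⨅ x, hb x := rfl
  have hMW : ∀ c : ℝ, ∀ s' : S, (M *ᵥ (fun x => (1-γ)⁻¹ * ρ x + hb x - c)) s'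
      = (1-γ)⁻¹ * ρ s' + (M *ᵥ hb) s' - c := by
    intro c s'
    have e : (fun x => (1-γ)⁻¹ * ρ x + hb x - c)
        = ((1-γ)⁻¹ • ρ + hb) - (fun _ => c) := rfl
    rw [e, Matrix.mulVec_sub, Matrix.mulVec_add, Matrix.mulVec_smul, hMρ,
      hM.mulVec_const c]
    rfl
  have key : ∀ c : ℝ, ∀ s' : S,
      v s' + γ * ((M *ᵥ (fun x => (1-γ)⁻¹ * ρ x + hb x - c)) s')
      - ((1-γ)⁻¹ * ρ s' + hb s' - c) = (1-γ) * (c - (M *ᵥ hb) s') := by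
    intro c s'
    have hev := h.eval_eq v s'
    rw [← ρdef, ← hbdef] at hev
    rw [hMW c s', hev]
    field_simp
    ring
  constructor
  · set c := ⨆ x, hb x with hcdef
    have hW : ∀ s', (fun x => (1-γ)⁻¹ * ρ x + hb x - c) s'
        ≤ v s' + γ * ((M *ᵥ (fun x => (1-γ)⁻¹ * ρ x + hb x - c)) s') := by
      intro s'
      have hMb : (M *ᵥ hb) s' ≤ c := hM.mulVec_le (fun j => le_ciSup hsup_b j) s'
      have k := key c s'
      have hpos : 0 ≤ (1-γ) * (c - (M *ᵥ hb) s') :=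
        mul_nonneg (by linarith) (by linarith)
      show (1-γ)⁻¹ * ρ s' + hb s' - c ≤ _
      linarith
    have hc := le_resApply_of_subinvariant hM hγ0 hγ1 v hW s
    have hc2 : (1-γ)⁻¹ * ρ s + hb s - c ≤ resApply γ M v s := hc
    have h2 : (⨅ x, hb x) ≤ hb s := ciInf_le hinf_b s
    rw [hspan]
    linarith
  · set c := ⨅ x, hb x with hcdef
    have hW : ∀ s', v s' + γ * ((M *ᵥ (fun x => (1-γ)⁻¹ * ρ x + hb x - c)) s')
        ≤ (fun x => (1-γ)⁻¹ * ρ x + hb x - c) s' := by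
      intro s'
      have hMb : c ≤ (M *ᵥ hb) s' := hM.le_mulVec (fun j => ciInf_le hinf_b j) s'
      have k := key c s'
      have hneg : (1-γ) * (c - (M *ᵥ hb) s') ≤ 0 :=
        mul_nonpos_of_nonneg_of_nonpos (by linarith) (by linarith)
      show _ ≤ (1-γ)⁻¹ * ρ s' + hb s' - c
      linarith
    have hc := resApply_le_of_superinvariant hM hγ0 hγ1 v hW s
    have hc2 : resApply γ M v s ≤ (1-γ)⁻¹ * ρ s + hb s - c := hc
    have h2 : hb s ≤ ⨆ x, hb x := le_ciSup hsup_b s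
    rw [hspan]
    linarith

lemma resApply_bounds (hM : Stoch M) (hγ0 : 0 ≤ γ) (hγ1 : γ < 1)
    {v : S → ℝ} (hv : ∀ s', 0 ≤ v s' ∧ v s' ≤ 1) (s : S) :
    0 ≤ resApply γ M v s ∧ resApply γ M v s ≤ (1-γ)⁻¹ := by
  rw [resApply_coord hM hγ0 hγ1 v s]
  constructor
  · apply tsum_nonneg
    intro t
    apply mul_nonneg (pow_nonneg hγ0 t)
    exact (hM.pow t).le_mulVec (fun j => (hv j).1) s
  · have hstep : ∀ t : ℕ, γ ^ t * ((M ^ t *ᵥ v) s) ≤ γ ^ t := by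
      intro t
      have h1 : (M ^ t *ᵥ v) s ≤ 1 := (hM.pow t).mulVec_le (fun j => (hv j).2) s
      have h2 := mul_le_mul_of_nonneg_left h1 (pow_nonneg hγ0 t)
      simpa using h2
    have h2 : ∑' t : ℕ, γ ^ t * ((M ^ t *ᵥ v) s) ≤ ∑' t : ℕ, γ ^ t :=
      Summable.tsum_le_tsum hstep (summable_coord hM hγ0 hγ1 v s)
        (summable_geometric_of_lt_one hγ0 hγ1)
    rw [tsum_geometric_of_lt_one hγ0 hγ1] at h2
    exact h2

end ExpandSec

section ReachSec
variable {M : Matrix S S ℝ}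

lemma reaches_refl (M : Matrix S S ℝ) (s : S) : Reaches M s s :=
  ⟨0, by simp [Matrix.one_apply_eq]⟩

lemma sum_pos_exists {f : S → ℝ} (_h0 : ∀ k, 0 ≤ f k) (hpos : 0 < ∑ k, f k) :
    ∃ k, 0 < f k := by
  by_contra hc
  push_neg at hc
  have : ∑ k, f k ≤ 0 := Finset.sum_nonpos fun k _ => hc k
  linarith

lemma reaches_trans (hM : Stoch M) {s s' s'' : S} (h1 : Reaches M s s')
    (h2 : Reaches M s' s'') : Reaches M s s'' := by
  obtain ⟨t, ht⟩ := h1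
  obtain ⟨u, hu⟩ := h2
  refine ⟨t + u, ?_⟩
  have e : (M ^ (t + u)) s s'' = ∑ k, (M ^ t) s k * (M ^ u) k s'' := by
    rw [pow_add, Matrix.mul_apply]
  rw [e]
  have hterm : 0 < (M ^ t) s s' * (M ^ u) s' s'' := mul_pos ht hu
  have hle : (M ^ t) s s' * (M ^ u) s' s'' ≤ ∑ k, (M ^ t) s k * (M ^ u) k s'' :=
    Finset.single_le_sum (f := fun k => (M ^ t) s k * (M ^ u) k s'')
      (fun k _ => mul_nonneg ((hM.pow t).1 s k) ((hM.pow u).1 k s''))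
      (Finset.mem_univ s')
  linarith

lemma exists_recurrent_aux (hM : Stoch M) :
    ∀ n : ℕ, ∀ s : S, {x | Reaches M s x}.ncard ≤ n →
      ∃ s', Reaches M s s' ∧ Recurrent M s' := by
  intro n
  induction n with
  | zero =>
    intro s hcard
    exfalso
    have h1 : s ∈ {x | Reaches M s x} := reaches_refl M s
    have h2 : {x | Reaches M s x}.Nonempty := ⟨s, h1⟩
    have h3 := Set.ncard_pos (Set.toFinite _) |>.mpr h2
    omega
  | succ n ih =>
    intro s hcard
    by_cases hrec : Recurrent M s
    · exact ⟨s, reaches_refl M s, hrec⟩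
    · rw [Recurrent] at hrec
      push_neg at hrec
      obtain ⟨s₁, hs₁, hns₁⟩ := hrec
      have hsub : {x | Reaches M s₁ x} ⊂ {x | Reaches M s x} := by
        constructor
        · intro y hy
          exact reaches_trans hM hs₁ hy
        · intro hcon
          exact hns₁ (hcon (reaches_refl M s))
      have hlt : {x | Reaches M s₁ x}.ncard < {x | Reaches M s x}.ncard :=
        Set.ncard_lt_ncard hsub (Set.toFinite _)
      obtain ⟨s', h1, h2⟩ := ih s₁ (by omega)
      exact ⟨s', reaches_trans hM hs₁ h1, h2⟩

lemma exists_recurrent (hM : Stoch M) (s : S) :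
    ∃ s', Reaches M s s' ∧ Recurrent M s' :=
  exists_recurrent_aux hM {x | Reaches M s x}.ncard s le_rfl

lemma closed_pow {U : Set S} (hM : Stoch M)
    (hU : ∀ x ∈ U, ∀ y, 0 < M x y → y ∈ U) :
    ∀ t : ℕ, ∀ x ∈ U, ∀ y, 0 < (M ^ t) x y → y ∈ U := by
  intro t
  induction t with
  | zero =>
    intro x hx y hy
    rw [pow_zero] at hy
    by_cases hxy : x = y
    · exact hxy ▸ hx
    · rw [Matrix.one_apply_ne hxy] at hy
      linarith
  | succ n ih =>
    intro x hx y hy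
    rw [pow_succ, Matrix.mul_apply] at hy
    obtain ⟨k, hk⟩ := sum_pos_exists
      (fun k => mul_nonneg ((hM.pow n).1 x k) (hM.1 k y)) hy
    have h1 : 0 < (M ^ n) x k := by
      rcases mul_pos_iff.mp hk with ⟨ha, _⟩ | ⟨ha, hb⟩
      · exact ha
      · exact absurd hb (not_lt.mpr (hM.1 k y))
    have h2 : 0 < M k y := by
      rcases mul_pos_iff.mp hk with ⟨_, hb⟩ | ⟨ha, _⟩
      · exact hb
      · exact absurd ha (not_lt.mpr ((hM.pow n).1 x k))
    exact hU k (ih x hx k h1) y h2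

lemma closed_pow_zero {U : Set S} (hM : Stoch M)
    (hU : ∀ x ∈ U, ∀ y, 0 < M x y → y ∈ U) {t : ℕ} {x y : S}
    (hx : x ∈ U) (hy : y ∉ U) : (M ^ t) x y = 0 := by
  by_contra hne
  have h1 : 0 < (M ^ t) x y := lt_of_le_of_ne ((hM.pow t).1 x y) (Ne.symm hne)
  exact hy (closed_pow hM hU t x hx y h1)

lemma harmonic_max_step (hM : Stoch M) {f : S → ℝ} (hf : M *ᵥ f = f) {m : ℝ}
    (hm : ∀ x, f x ≤ m) {x y : S} (hx : f x = m) (hxy : 0 < M x y) : f y = m := by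
  by_contra hne
  have hlt : f y < m := lt_of_le_of_ne (hm y) hne
  have h1 : (M *ᵥ f) x < ∑ k, M x k * m := by
    apply Finset.sum_lt_sum
    · intro k _
      exact mul_le_mul_of_nonneg_left (hm k) (hM.1 x k)
    · exact ⟨y, Finset.mem_univ y, by nlinarith⟩
  rw [congrFun hf x] at h1
  rw [← Finset.sum_mul, hM.2 x, one_mul, hx] at h1
  linarith

lemma harmonic_max_pow (hM : Stoch M) {f : S → ℝ} (hf : M *ᵥ f = f) {m : ℝ}
    (hm : ∀ x, f x ≤ m) :
    ∀ t : ℕ, ∀ x y, f x = m → 0 < (M ^ t) x y → f y = m := by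
  intro t
  induction t with
  | zero =>
    intro x y hx hy
    rw [pow_zero] at hy
    by_cases hxy : x = y
    · exact hxy ▸ hx
    · rw [Matrix.one_apply_ne hxy] at hy
      linarith
  | succ n ih =>
    intro x y hx hy
    rw [pow_succ, Matrix.mul_apply] at hy
    obtain ⟨k, hk⟩ := sum_pos_exists
      (fun k => mul_nonneg ((hM.pow n).1 x k) (hM.1 k y)) hy
    have h1 : 0 < (M ^ n) x k := by
      rcases mul_pos_iff.mp hk with ⟨ha, _⟩ | ⟨_, hb⟩
      · exact ha
      · exact absurd hb (not_lt.mpr (hM.1 k y))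
    have h2 : 0 < M k y := by
      rcases mul_pos_iff.mp hk with ⟨_, hb⟩ | ⟨ha, _⟩
      · exact hb
      · exact absurd ha (not_lt.mpr ((hM.pow n).1 x k))
    exact harmonic_max_step hM hf hm (ih x k hx h1) h2

lemma pow_agree {M M' : Matrix S S ℝ} {U : Set S}
    (hU : ∀ x ∈ U, ∀ y, M x y ≠ 0 → y ∈ U)
    (hrow : ∀ x ∈ U, ∀ y, M x y = M' x y) :
    ∀ t : ℕ, ∀ x ∈ U, ∀ y, (M ^ t) x y = (M' ^ t) x y := by
  intro t
  induction t with
  | zero => intro x _ y; simp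
  | succ n ih =>
    intro x hx y
    rw [pow_succ', pow_succ', Matrix.mul_apply, Matrix.mul_apply]
    apply Finset.sum_congr rfl
    intro k _
    by_cases hk : M x k = 0
    · rw [← hrow x hx k, hk, zero_mul, zero_mul]
    · rw [← hrow x hx k, ih k (hU x hx k hk) y]

end ReachSec

section MDPGlue
variable [Fintype A] [Nonempty A]

lemma polMat_stoch {p : S → A → S → ℝ} (hp : IsKernel p) {pol : S → A → ℝ}
    (hpol : IsPolicy pol) : Stoch (polMat p pol) := by
  constructor
  · intro s s'
    apply Finset.sum_nonneg
    intro a _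
    exact mul_nonneg ((hpol s).1 a) ((hp s a).1 s')
  · intro s
    have e : ∑ s', polMat p pol s s' = ∑ s', ∑ a, pol s a * p s a s' := rfl
    rw [e, Finset.sum_comm]
    have h1 : ∀ a, ∑ s', pol s a * p s a s' = pol s a := fun a => by
      rw [← Finset.mul_sum, (hp s a).2, mul_one]
    rw [Finset.sum_congr rfl fun a _ => h1 a, (hpol s).2]

lemma polRew_bounds {r : S → A → ℝ} (hr : ∀ s a, r s a ∈ Set.Icc (0:ℝ) 1)
    {pol : S → A → ℝ} (hpol : IsPolicy pol) :
    ∀ s, 0 ≤ polRew r pol s ∧ polRew r pol s ≤ 1 := by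
  intro s
  constructor
  · apply Finset.sum_nonneg
    intro a _
    exact mul_nonneg ((hpol s).1 a) (hr s a).1
  · have h1 : polRew r pol s ≤ ∑ a, pol s a * 1 := by
      apply Finset.sum_le_sum
      intro a _
      exact mul_le_mul_of_nonneg_left (hr s a).2 ((hpol s).1 a)
    calc polRew r pol s ≤ ∑ a, pol s a * 1 := h1
    _ = 1 := by rw [Finset.sum_congr rfl fun a _ => mul_one (pol s a), (hpol s).2]

lemma gain_eq_Q {p : S → A → S → ℝ} {r : S → A → ℝ} {pol : S → A → ℝ}
    {Q : Matrix S S ℝ} (h : CesLim (polMat p pol) Q) :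
    gain p r pol = Q *ᵥ polRew r pol :=
  h.cesaro_vec (polRew r pol)

lemma bias_eq_Q {p : S → A → S → ℝ} {r : S → A → ℝ} {pol : S → A → ℝ}
    {Q : Matrix S S ℝ} (h : CesLim (polMat p pol) Q) :
    bias p r pol = (((1 - polMat p pol + Q)⁻¹ - Q)) *ᵥ polRew r pol := by
  unfold bias
  rw [gain_eq_Q h]
  exact h.bias_vec (polRew r pol)

lemma gain_bounds {p : S → A → S → ℝ} (hp : IsKernel p) {r : S → A → ℝ}
    (hr : ∀ s a, r s a ∈ Set.Icc (0:ℝ) 1) {pol : S → A → ℝ} (hpol : IsPolicy pol)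
    {Q : Matrix S S ℝ} (h : CesLim (polMat p pol) Q) (s : S) :
    0 ≤ gain p r pol s ∧ gain p r pol s ≤ 1 := by
  rw [gain_eq_Q h]
  constructor
  · exact h.stoch.le_mulVec (fun j => (polRew_bounds hr hpol j).1) s
  · exact h.stoch.mulVec_le (fun j => (polRew_bounds hr hpol j).2) s

lemma span_nonneg (v : S → ℝ) : 0 ≤ span v := by
  obtain ⟨s⟩ := (inferInstance : Nonempty S)
  have h1 : v s ≤ ⨆ x, v x := le_ciSup (Finite.bddAbove_range v) s
  have h2 : (⨅ x, v x) ≤ v s := ciInf_le (Finite.bddBelow_range v) s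
  have e : span v = (⨆ x, v x) - ⨅ x, v x := rfl
  rw [e]
  linarith

/-- The gain of a policy equals `(1-γ) Q *ᵥ V_γ`. -/
lemma gain_ge_min_dval {p : S → A → S → ℝ} (hp : IsKernel p) {r : S → A → ℝ}
    (hr : ∀ s a, r s a ∈ Set.Icc (0:ℝ) 1) {pol : S → A → ℝ} (hpol : IsPolicy pol)
    {γ : ℝ} (hγ0 : 0 ≤ γ) (hγ1 : γ < 1) (s s₀ : S)
    (hs₀ : ∀ y, dval p r γ pol s₀ ≤ dval p r γ pol y) :
    (1 - γ) * dval p r γ pol s₀ ≤ gain p r pol s := by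
  classical
  set M := polMat p pol with hMdef
  have hMst : Stoch M := polMat_stoch hp hpol
  obtain ⟨Q, hQ⟩ := exists_cesLim hMst
  set v := polRew r pol with hvdef
  set V : S → ℝ := dval p r γ pol with hVdef
  have hVres : V = resApply γ M v := rfl
  have hB : V = v + γ • (M *ᵥ V) := by
    rw [hVres]
    exact resApply_bellman hMst hγ0 hγ1 v
  have hveq : v = V - γ • (M *ᵥ V) := by
    rw [eq_sub_iff_add_eq]
    exact hB.symm
  have hkey : gain p r pol = (1 - γ) • (Q *ᵥ V) := by
    rw [gain_eq_Q hQ, ← hvdef, hveq, Matrix.mulVec_sub, Matrix.mulVec_smul,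
      Matrix.mulVec_mulVec, hQ.right]
    funext x
    simp only [Pi.sub_apply, Pi.smul_apply, smul_eq_mul]
    ring
  have h2 : dval p r γ pol s₀ ≤ (Q *ᵥ V) s := hQ.stoch.le_mulVec hs₀ s
  have h3 : gain p r pol s = (1 - γ) * ((Q *ᵥ V) s) := by
    rw [hkey]
    rfl
  rw [h3]
  exact mul_le_mul_of_nonneg_left h2 (by linarith)

end MDPGlue

section ReachPol
variable [Fintype A] [Nonempty A]

lemma rtg_to_reaches {M : Matrix S S ℝ} (hM : Stoch M) {D : Set S} {x y : S}
    (h : Relation.ReflTransGen (fun u w => u ∈ D ∧ 0 < M u w) x y) : Reaches M x y := by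
  induction h with
  | refl => exact reaches_refl M x
  | tail hab hbc ih => exact reaches_trans hM ih ⟨1, by simpa using hbc.2⟩

lemma extend_reach {p : S → A → S → ℝ} (hp : IsKernel p)
    {polB : S → A → ℝ} (hpolB : IsPolicy polB)
    {S1 : Set S}
    (hS1trans : ∀ s ∈ S1, ∀ pol : S → A → ℝ, IsPolicy pol → ¬Recurrent (polMat p pol) s)
    (hS1comm : ∀ s ∉ S1, ∀ s' ∉ S1, ∃ pol : S → A → ℝ,
      IsPolicy pol ∧ Reaches (polMat p pol) s s')
    {C : Set S} {sstar : S} (hsC : sstar ∈ C) (hsN : sstar ∉ S1) :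
    ∀ n : ℕ, ∀ (pol : S → A → ℝ) (D : Set S), IsPolicy pol → C ⊆ D →
      (∀ x ∈ C, ∀ a, pol x a = polB x a) →
      (∀ x ∈ D, ∃ y ∈ C,
        Relation.ReflTransGen (fun u w => u ∈ D ∧ 0 < polMat p pol u w) x y) →
      Dᶜ.ncard ≤ n →
      ∃ pol' : S → A → ℝ, IsPolicy pol' ∧ (∀ x ∈ C, ∀ a, pol' x a = polB x a) ∧
        ∀ x, ∃ y ∈ C, Reaches (polMat p pol') x y := by
  classical
  have finish : ∀ (pol : S → A → ℝ) (D : Set S), IsPolicy pol →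
      (∀ x ∈ C, ∀ a, pol x a = polB x a) →
      (∀ x ∈ D, ∃ y ∈ C,
        Relation.ReflTransGen (fun u w => u ∈ D ∧ 0 < polMat p pol u w) x y) →
      (∀ x, x ∈ D) →
      ∃ pol' : S → A → ℝ, IsPolicy pol' ∧ (∀ x ∈ C, ∀ a, pol' x a = polB x a) ∧
        ∀ x, ∃ y ∈ C, Reaches (polMat p pol') x y := by
    intro pol D hpol hagree hinv huniv
    refine ⟨pol, hpol, hagree, fun x => ?_⟩
    obtain ⟨y, hy, hrtg⟩ := hinv x (huniv x)
    exact ⟨y, hy, rtg_to_reaches (polMat_stoch hp hpol) hrtg⟩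
  intro n
  induction n with
  | zero =>
    intro pol D hpol hCD hagree hinv hcard
    apply finish pol D hpol hagree hinv
    intro x
    by_contra hx
    have h1 : Dᶜ.Nonempty := ⟨x, hx⟩
    have h2 := Set.ncard_pos (Set.toFinite _) |>.mpr h1
    omega
  | succ n ih =>
    intro pol D hpol hCD hagree hinv hcard
    by_cases hD : ∀ x, x ∈ D
    · exact finish pol D hpol hagree hinv hD
    · push_neg at hD
      obtain ⟨x₀, hx₀⟩ := hD
      -- find a state outside D with a transition into D
      have hstep : ∃ x₁, ∃ a₀, ∃ y₁, x₁ ∉ D ∧ y₁ ∈ D ∧ 0 < p x₁ a₀ y₁ := by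
        by_contra hno
        push_neg at hno
        have hclosed : ∀ (q : S → A → ℝ), IsPolicy q → ∀ u ∈ (Dᶜ : Set S), ∀ w,
            0 < polMat p q u w → w ∈ (Dᶜ : Set S) := by
          intro q hq u hu w hw
          by_contra hwD
          rw [Set.notMem_compl_iff] at hwD
          have hz : ∀ a, q u a * p u a w = 0 := by
            intro a
            have h1 := hno u a w hu hwD
            have h2 := (hp u a).1 w
            have h3 : p u a w = 0 := le_antisymm h1 h2
            rw [h3, mul_zero]
          have : polMat p q u w = 0 := by
            have e : polMat p q u w = ∑ a, q u a * p u a w := rfl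
            rw [e, Finset.sum_congr rfl fun a _ => hz a, Finset.sum_const, smul_zero]
          linarith
        obtain ⟨y₀, hreach₀, hrec₀⟩ := exists_recurrent (polMat_stoch hp hpolB) x₀
        have hy₀Dc : y₀ ∈ (Dᶜ : Set S) := by
          obtain ⟨t, ht⟩ := hreach₀
          exact closed_pow (polMat_stoch hp hpolB) (hclosed polB hpolB) t x₀ hx₀ y₀ ht
        by_cases hy₀S1 : y₀ ∈ S1
        · exact hS1trans y₀ hy₀S1 polB hpolB hrec₀
        · obtain ⟨q, hq, hreachq⟩ := hS1comm y₀ hy₀S1 sstar hsN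
          obtain ⟨t, ht⟩ := hreachq
          have : sstar ∈ (Dᶜ : Set S) :=
            closed_pow (polMat_stoch hp hq) (hclosed q hq) t y₀ hy₀Dc sstar ht
          exact this (hCD hsC)
      obtain ⟨x₁, a₀, y₁, hx₁, hy₁, hpy₁⟩ := hstep
      set pol' : S → A → ℝ := fun x a => if x = x₁ then (if a = a₀ then 1 else 0) else pol x a
        with hpol'def
      have hpol' : IsPolicy pol' := by
        intro s
        by_cases hs : s = x₁
        · subst hs
          constructor
          · intro a
            simp only [hpol'def, if_pos rfl]
            split <;> norm_num
          · simp only [hpol'def, if_pos rfl]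
            rw [Finset.sum_ite_eq' Finset.univ a₀ (fun _ => (1:ℝ))]
            simp
        · constructor
          · intro a
            simp only [hpol'def, if_neg hs]
            exact (hpol s).1 a
          · simp only [hpol'def, if_neg hs]
            exact (hpol s).2
      have hrows : ∀ u, u ≠ x₁ → ∀ w, polMat p pol' u w = polMat p pol u w := by
        intro u hu w
        have e1 : polMat p pol' u w = ∑ a, pol' u a * p u a w := rfl
        have e2 : polMat p pol u w = ∑ a, pol u a * p u a w := rfl
        rw [e1, e2]
        apply Finset.sum_congr rfl
        intro a _
        simp only [hpol'def, if_neg hu]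
      have hagree' : ∀ x ∈ C, ∀ a, pol' x a = polB x a := by
        intro x hx a
        have hne : x ≠ x₁ := fun he => hx₁ (he ▸ hCD hx)
        simp only [hpol'def, if_neg hne]
        exact hagree x hx a
      have hx₁step : 0 < polMat p pol' x₁ y₁ := by
        have e : polMat p pol' x₁ y₁ = p x₁ a₀ y₁ := by
          have e1 : polMat p pol' x₁ y₁ = ∑ a, pol' x₁ a * p x₁ a y₁ := rfl
          rw [e1]
          have e2 : ∀ a, pol' x₁ a * p x₁ a y₁ = if a = a₀ then p x₁ a y₁ else 0 := by
            intro a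
            simp only [hpol'def, if_pos rfl]
            split <;> simp
          rw [Finset.sum_congr rfl fun a _ => e2 a,
            Finset.sum_ite_eq' Finset.univ a₀ (fun a => p x₁ a y₁)]
          simp
        rw [e]
        exact hpy₁
      set D' : Set S := insert x₁ D with hD'def
      have hliftD : ∀ x ∈ D, ∃ y ∈ C,
          Relation.ReflTransGen (fun u w => u ∈ D' ∧ 0 < polMat p pol' u w) x y := by
        intro x hx
        obtain ⟨y, hy, hrtg⟩ := hinv x hx
        refine ⟨y, hy, Relation.ReflTransGen.mono ?_ x y hrtg⟩
        intro u w huw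
        refine ⟨Set.mem_insert_of_mem _ huw.1, ?_⟩
        have hune : u ≠ x₁ := fun he => hx₁ (he ▸ huw.1)
        rw [hrows u hune w]
        exact huw.2
      have hinv' : ∀ x ∈ D', ∃ y ∈ C,
          Relation.ReflTransGen (fun u w => u ∈ D' ∧ 0 < polMat p pol' u w) x y := by
        intro x hx
        rcases Set.mem_insert_iff.mp hx with hx | hx
        · subst hx
          obtain ⟨y, hy, hrtg⟩ := hliftD y₁ hy₁
          exact ⟨y, hy, Relation.ReflTransGen.head ⟨Set.mem_insert _ _, hx₁step⟩ hrtg⟩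
        · exact hliftD x hx
      have hcard' : D'ᶜ.ncard ≤ n := by
        have e : D'ᶜ = Dᶜ \ {x₁} := by
          ext z
          simp [hD'def, Set.mem_insert_iff, not_or, and_comm]
        have hlt : (Dᶜ \ {x₁}).ncard < Dᶜ.ncard :=
          Set.ncard_diff_singleton_lt_of_mem hx₁ (Set.toFinite _)
        rw [e]
        omega
      exact ih pol' D' hpol' (hCD.trans (Set.subset_insert _ _)) hagree' hinv' hcard'

end ReachPol

section AbsorbSec

lemma mulVec_pow_fixed {M : Matrix S S ℝ} {f : S → ℝ} (hf : M *ᵥ f = f) (t : ℕ) :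
    (M ^ t) *ᵥ f = f := by
  induction t with
  | zero => simp [Matrix.one_mulVec]
  | succ n ih => rw [pow_succ, ← Matrix.mulVec_mulVec, hf, ih]

lemma absorbed_harmonic {M : Matrix S S ℝ} (hM : Stoch M) {C : Set S}
    (hC : ∀ u ∈ C, ∀ w, 0 < M u w → w ∈ C)
    {f : S → ℝ} (hf : M *ᵥ f = f) (hfb : ∀ x, 0 ≤ f x ∧ f x ≤ 1)
    {m : ℝ} (hm : 0 ≤ m ∧ m ≤ 1) (hfC : ∀ x ∈ C, f x = m)
    (hreach : ∀ x, ∃ y ∈ C, Reaches M x y) :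
    ∀ x, f x = m := by
  classical
  set fC : Finset S := Finset.univ.filter (fun y => y ∈ C) with hfCdef
  set g : ℕ → S → ℝ := fun t x => ∑ y ∈ fC, (M ^ t) x y with hgdef
  set gb : ℕ → S → ℝ := fun t x => ∑ y ∈ Finset.univ.filter (fun y => y ∉ C), (M ^ t) x y
    with hgbdef
  have hsplit : ∀ t x, g t x + gb t x = 1 := by
    intro t x
    have := Finset.sum_filter_add_sum_filter_not Finset.univ (fun y => y ∈ C)
      (fun y => (M ^ t) x y)
    rw [hgdef, hgbdef]
    simp only []
    rw [this]
    exact (hM.pow t).2 x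
  have hg_nonneg : ∀ t x, 0 ≤ g t x :=
    fun t x => Finset.sum_nonneg fun y _ => (hM.pow t).1 x y
  have hgb_nonneg : ∀ t x, 0 ≤ gb t x :=
    fun t x => Finset.sum_nonneg fun y _ => (hM.pow t).1 x y
  have hg_le_one : ∀ t x, g t x ≤ 1 := by
    intro t x
    have := hgb_nonneg t x
    have := hsplit t x
    linarith
  -- for states inside C, all mass stays in C
  have hinC : ∀ t, ∀ k ∈ C, g t k = 1 := by
    intro t k hk
    have h0 : gb t k = 0 := by
      rw [hgbdef]
      apply Finset.sum_eq_zero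
      intro y hy
      rw [Finset.mem_filter] at hy
      exact closed_pow_zero hM hC hk hy.2
    have := hsplit t k
    linarith
  -- monotonicity of g in t
  have hg_mono1 : ∀ t x, g t x ≤ g (t+1) x := by
    intro t x
    have e1 : g (t+1) x = ∑ k, (M ^ t) x k * (∑ y ∈ fC, M k y) := by
      rw [hgdef]
      simp only []
      have e2 : ∀ y, (M ^ (t+1)) x y = ∑ k, (M ^ t) x k * M k y := by
        intro y
        rw [pow_succ, Matrix.mul_apply]
      rw [Finset.sum_congr rfl fun y _ => e2 y, Finset.sum_comm]
      exact Finset.sum_congr rfl fun k _ => by rw [Finset.mul_sum]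
    rw [e1]
    have e3 : g t x = ∑ k ∈ fC, (M ^ t) x k * (∑ y ∈ fC, M k y) := by
      rw [hgdef]
      simp only []
      apply Finset.sum_congr rfl
      intro k hk
      rw [Finset.mem_filter] at hk
      have hone : ∑ y ∈ fC, M k y = 1 := by
        have h0 : ∑ y ∈ Finset.univ.filter (fun y => y ∉ C), M k y = 0 := by
          apply Finset.sum_eq_zero
          intro y hy
          rw [Finset.mem_filter] at hy
          have := closed_pow_zero hM hC (t := 1) hk.2 hy.2
          rwa [pow_one] at this
        have hsum := Finset.sum_filter_add_sum_filter_not Finset.univ (fun y => y ∈ C)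
          (fun y => M k y)
        rw [h0, add_zero] at hsum
        calc ∑ y ∈ fC, M k y = ∑ y, M k y := hsum
        _ = 1 := hM.2 k
      rw [hone, mul_one]
    rw [e3]
    apply Finset.sum_le_sum_of_subset_of_nonneg (Finset.filter_subset _ _)
    intro k _ _
    apply mul_nonneg ((hM.pow t).1 x k)
    exact Finset.sum_nonneg fun y _ => hM.1 k y
  have hg_mono : ∀ x, Monotone (fun t => g t x) :=
    fun x => monotone_nat_of_le_succ (fun t => hg_mono1 t x)
  -- positivity of reaching probability
  have hg_pos : ∀ x, ∃ t, 0 < g t x := by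
    intro x
    obtain ⟨y, hy, t, ht⟩ := hreach x
    refine ⟨t, lt_of_lt_of_le ht ?_⟩
    apply Finset.single_le_sum (f := fun y' => (M ^ t) x y')
      (fun y' _ => (hM.pow t).1 x y')
    rw [Finset.mem_filter]
    exact ⟨Finset.mem_univ y, hy⟩
  choose tfun htfun using hg_pos
  set T : ℕ := Finset.univ.sup tfun with hTdef
  have hgT : ∀ x, 0 < g T x := by
    intro x
    exact lt_of_lt_of_le (htfun x) (hg_mono x (Finset.le_sup (Finset.mem_univ x)))
  set δ : ℝ := Finset.univ.inf' Finset.univ_nonempty (fun x => g T x) with hδdef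
  have hδpos : 0 < δ := (Finset.lt_inf'_iff _).mpr fun x _ => hgT x
  have hδle : ∀ x, δ ≤ g T x := fun x => Finset.inf'_le _ (Finset.mem_univ x)
  have hδ1 : δ ≤ 1 := le_trans (hδle (Classical.arbitrary S)) (hg_le_one T _)
  -- geometric decay of the escaping mass
  have hstep : ∀ t x, gb (t + T) x ≤ (1 - δ) * gb t x := by
    intro t x
    have e1 : gb (t + T) x
        = ∑ k, (M ^ t) x k * gb T k := by
      rw [hgbdef]
      simp only []
      have e2 : ∀ y, (M ^ (t+T)) x y = ∑ k, (M ^ t) x k * (M ^ T) k y := by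
        intro y
        rw [pow_add, Matrix.mul_apply]
      rw [Finset.sum_congr rfl fun y _ => e2 y, Finset.sum_comm]
      exact Finset.sum_congr rfl fun k _ => by rw [Finset.mul_sum]
    rw [e1]
    have hbd : ∀ k, (M ^ t) x k * gb T k ≤ (M ^ t) x k * ((1 - δ) *
        (if k ∈ C then 0 else 1)) := by
      intro k
      apply mul_le_mul_of_nonneg_left _ ((hM.pow t).1 x k)
      by_cases hk : k ∈ C
      · have h0 : gb T k = 0 := by
          have := hinC T k hk
          have := hsplit T k
          linarith
        rw [h0, if_pos hk, mul_zero]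
      · have h1 : gb T k ≤ 1 - δ := by
          have := hδle k
          have := hsplit T k
          linarith
        rw [if_neg hk, mul_one]
        exact h1
    calc ∑ k, (M ^ t) x k * gb T k
        ≤ ∑ k, (M ^ t) x k * ((1 - δ) * (if k ∈ C then 0 else 1)) :=
          Finset.sum_le_sum fun k _ => hbd k
    _ = (1 - δ) * ∑ k, (M ^ t) x k * (if k ∈ C then 0 else 1) := by
        rw [Finset.mul_sum]
        exact Finset.sum_congr rfl fun k _ => by ring
    _ = (1 - δ) * gb t x := by
        congr 1
        rw [hgbdef]
        simp only []
        rw [← Finset.sum_filter_add_sum_filter_not Finset.univ (fun y => y ∉ C)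
          (fun k => (M ^ t) x k * (if k ∈ C then 0 else 1))]
        have hA : ∑ k ∈ Finset.univ.filter (fun y => y ∉ C),
            (M ^ t) x k * (if k ∈ C then 0 else 1)
            = ∑ k ∈ Finset.univ.filter (fun y => y ∉ C), (M ^ t) x k := by
          apply Finset.sum_congr rfl
          intro k hk
          rw [Finset.mem_filter] at hk
          rw [if_neg hk.2, mul_one]
        have hB : ∑ k ∈ Finset.univ.filter (fun y => ¬ y ∉ C),
            (M ^ t) x k * (if k ∈ C then 0 else 1) = 0 := by
          apply Finset.sum_eq_zero
          intro k hk
          rw [Finset.mem_filter, not_not] at hk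
          rw [if_pos hk.2, mul_zero]
        rw [hA, hB, add_zero]
  have hdecay : ∀ k x, gb (k * T) x ≤ (1 - δ) ^ k := by
    intro k
    induction k with
    | zero =>
      intro x
      have := hsplit 0 x
      have := hg_nonneg 0 x
      simpa using by linarith [hgb_nonneg 0 x, hg_nonneg 0 x, hsplit 0 x]
    | succ n ih =>
      intro x
      have e : (n + 1) * T = n * T + T := by ring
      rw [e]
      calc gb (n * T + T) x ≤ (1 - δ) * gb (n * T) x := hstep (n * T) x
      _ ≤ (1 - δ) * (1 - δ) ^ n :=
          mul_le_mul_of_nonneg_left (ih x) (by linarith)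
      _ = (1 - δ) ^ (n + 1) := by ring
  -- conclusion
  intro x
  have hkey : ∀ k : ℕ, |f x - m| ≤ 2 * (1 - δ) ^ k := by
    intro k
    have hfx : f x = ∑ y, (M ^ (k * T)) x y * f y := by
      have := congrFun (mulVec_pow_fixed hf (k * T)) x
      rw [← this]
      rfl
    have hsplit2 : ∑ y, (M ^ (k * T)) x y * f y
        = ∑ y ∈ fC, (M ^ (k * T)) x y * f y
          + ∑ y ∈ Finset.univ.filter (fun y => y ∉ C), (M ^ (k * T)) x y * f y := by
      rw [hfCdef]
      exact (Finset.sum_filter_add_sum_filter_not Finset.univ (fun y => y ∈ C) _).symm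
    have hCpart : ∑ y ∈ fC, (M ^ (k * T)) x y * f y = m * g (k * T) x := by
      rw [hgdef]
      simp only []
      rw [Finset.mul_sum]
      apply Finset.sum_congr rfl
      intro y hy
      rw [hfCdef, Finset.mem_filter] at hy
      rw [hfC y hy.2]
      ring
    set E := ∑ y ∈ Finset.univ.filter (fun y => y ∉ C), (M ^ (k * T)) x y * f y with hEdef
    have hE0 : 0 ≤ E :=
      Finset.sum_nonneg fun y _ => mul_nonneg ((hM.pow _).1 x y) (hfb y).1
    have hE1 : E ≤ gb (k * T) x := by
      rw [hEdef, hgbdef]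
      simp only []
      apply Finset.sum_le_sum
      intro y _
      have := mul_le_mul_of_nonneg_left (hfb y).2 ((hM.pow (k * T)).1 x y)
      simpa using this
    have hgbk := hdecay k x
    have hgb0 := hgb_nonneg (k * T) x
    have hsp := hsplit (k * T) x
    rw [hfx, hsplit2, hCpart]
    rw [abs_le]
    constructor
    · nlinarith [hm.1, hm.2]
    · nlinarith [hm.1, hm.2]
  have htend : Tendsto (fun k : ℕ => 2 * (1 - δ) ^ k) atTop (𝓝 0) := by
    have h1 : Tendsto (fun k : ℕ => (1 - δ) ^ k) atTop (𝓝 0) :=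
      tendsto_pow_atTop_nhds_zero_of_lt_one (by linarith) (by linarith)
    have := h1.const_mul 2
    simpa using this
  have habs : |f x - m| ≤ 0 :=
    ge_of_tendsto htend (Eventually.of_forall fun k => hkey k)
  have : |f x - m| = 0 := le_antisymm habs (abs_nonneg _)
  have := abs_eq_zero.mp this
  linarith [sub_eq_zero.mp this]
end AbsorbSec

section ConstSec
variable [Fintype A] [Nonempty A]

theorem gain_const {p : S → A → S → ℝ} (hp : IsKernel p)
    {r : S → A → ℝ} (hr : ∀ s a, r s a ∈ Set.Icc (0:ℝ) 1)
    (hwc : WeaklyCommunicating p)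
    {polB : S → A → ℝ} (hpolB : Blackwell p r polB) :
    ∀ s s', gain p r polB s = gain p r polB s' := by
  classical
  obtain ⟨hpolB1, γ₀, hγ₀, hBopt⟩ := hpolB
  set M := polMat p polB with hMdef
  have hMst : Stoch M := polMat_stoch hp hpolB1
  obtain ⟨Q, hQ⟩ := exists_cesLim hMst
  set v : S → ℝ := polRew r polB with hvdef
  set ρ : S → ℝ := gain p r polB with hρdef
  have hρQ : ρ = Q *ᵥ v := gain_eq_Q hQ
  have hharm : M *ᵥ ρ = ρ := by rw [hρQ, Matrix.mulVec_mulVec, hQ.left]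
  obtain ⟨smax, hsmax⟩ := Finite.exists_max ρ
  set m := ρ smax with hmdef
  obtain ⟨sstar, hreachs, hrecs⟩ := exists_recurrent hMst smax
  have hsstarm : ρ sstar = m := by
    obtain ⟨t, ht⟩ := hreachs
    exact harmonic_max_pow hMst hharm hsmax t smax sstar rfl ht
  set C : Set S := {x | Reaches M sstar x} with hCdef
  have hsstarC : sstar ∈ C := reaches_refl M sstar
  have hCclosed : ∀ x ∈ C, ∀ y, 0 < M x y → y ∈ C := by
    intro x hx y hxy
    exact reaches_trans hMst hx ⟨1, by simpa using hxy⟩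
  have hCm : ∀ x ∈ C, ρ x = m := by
    intro x hx
    obtain ⟨t, ht⟩ := hx
    exact harmonic_max_pow hMst hharm hsmax t sstar x hsstarm ht
  obtain ⟨S1, hS1trans, hS1comm⟩ := hwc
  have hsN : sstar ∉ S1 := fun hin => hS1trans sstar hin polB hpolB1 hrecs
  have hinv0 : ∀ x ∈ C, ∃ y ∈ C,
      Relation.ReflTransGen (fun u w => u ∈ C ∧ 0 < polMat p polB u w) x y :=
    fun x hx => ⟨x, hx, Relation.ReflTransGen.refl⟩
  obtain ⟨polT, hpolT, hagree, hreachC⟩ := extend_reach hp hpolB1 hS1trans hS1comm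
    hsstarC hsN Cᶜ.ncard polB C hpolB1 subset_rfl (fun x hx a => rfl) hinv0 le_rfl
  set MT := polMat p polT with hMTdef
  have hMTst : Stoch MT := polMat_stoch hp hpolT
  obtain ⟨QT, hQT⟩ := exists_cesLim hMTst
  set vT : S → ℝ := polRew r polT with hvTdef
  set f : S → ℝ := gain p r polT with hfdef
  have hfQ : f = QT *ᵥ vT := gain_eq_Q hQT
  have hharmT : MT *ᵥ f = f := by rw [hfQ, Matrix.mulVec_mulVec, hQT.left]
  have hfb : ∀ x, 0 ≤ f x ∧ f x ≤ 1 := fun x => gain_bounds hp hr hpolT hQT x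
  have hmb : 0 ≤ m ∧ m ≤ 1 := gain_bounds hp hr hpolB1 hQ smax
  have hrowsC : ∀ x ∈ C, ∀ y, M x y = MT x y := by
    intro x hx y
    apply Finset.sum_congr rfl
    intro a _
    rw [hagree x hx a]
  have hCclosedT : ∀ u ∈ C, ∀ w, 0 < MT u w → w ∈ C := by
    intro u hu w hw
    apply hCclosed u hu w
    rwa [hrowsC u hu w]
  -- f = m on C
  have hfC : ∀ x ∈ C, f x = m := by
    intro x hx
    have hUne : ∀ u ∈ C, ∀ w, M u w ≠ 0 → w ∈ C := by
      intro u hu w hw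
      exact hCclosed u hu w (lt_of_le_of_ne (hMst.1 u w) (Ne.symm hw))
    have hpows : ∀ T : ℕ, ∀ y, (M ^ T) x y = (MT ^ T) x y :=
      fun T y => pow_agree hUne hrowsC T x hx y
    have hseq : ∀ T : ℕ, ((M ^ T) *ᵥ v) x = ((MT ^ T) *ᵥ vT) x := by
      intro T
      show ∑ y, (M ^ T) x y * v y = ∑ y, (MT ^ T) x y * vT y
      apply Finset.sum_congr rfl
      intro y _
      by_cases hy : y ∈ C
      · rw [hpows T y]
        congr 1
        apply Finset.sum_congr rfl
        intro a _
        rw [hagree y hy a]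
      · rw [closed_pow_zero hMst hCclosed hx hy, ← hpows T y,
          closed_pow_zero hMst hCclosed hx hy, zero_mul, zero_mul]
    have h1 : Tendsto (fun N : ℕ => ((N:ℝ)⁻¹ • ∑ T ∈ Finset.range N, (M ^ T) *ᵥ v) x)
        atTop (𝓝 ((Q *ᵥ v) x)) := tendsto_pi_nhds.mp (hQ.cesaro_vec' v) x
    have h2 : Tendsto (fun N : ℕ => ((N:ℝ)⁻¹ • ∑ T ∈ Finset.range N, (MT ^ T) *ᵥ vT) x)
        atTop (𝓝 ((QT *ᵥ vT) x)) := tendsto_pi_nhds.mp (hQT.cesaro_vec' vT) x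
    have hNeq : ∀ N : ℕ, ((N:ℝ)⁻¹ • ∑ T ∈ Finset.range N, (M ^ T) *ᵥ v) x
        = ((N:ℝ)⁻¹ • ∑ T ∈ Finset.range N, (MT ^ T) *ᵥ vT) x := by
      intro N
      show (N:ℝ)⁻¹ * ((∑ T ∈ Finset.range N, (M ^ T) *ᵥ v) x)
        = (N:ℝ)⁻¹ * ((∑ T ∈ Finset.range N, (MT ^ T) *ᵥ vT) x)
      congr 1
      rw [Finset.sum_apply, Finset.sum_apply]
      exact Finset.sum_congr rfl fun T _ => hseq T
    have heq : (Q *ᵥ v) x = (QT *ᵥ vT) x :=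
      tendsto_nhds_unique (h1.congr hNeq) h2
    have e1 : f x = (QT *ᵥ vT) x := congrFun hfQ x
    have e2 : ρ x = (Q *ᵥ v) x := congrFun hρQ x
    rw [e1, ← heq, ← e2]
    exact hCm x hx
  -- absorption: f = m everywhere
  have hfm : ∀ x, f x = m :=
    absorbed_harmonic hMTst hCclosedT hharmT hfb hmb hfC hreachC
  -- Blackwell dominance: f ≤ ρ
  have hdom : ∀ x, f x ≤ ρ x := by
    intro x
    apply le_of_forall_pos_le_add
    intro ε hε
    set sB := span (((1 - M + Q)⁻¹ - Q) *ᵥ v) with hsBdef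
    set sT := span (((1 - MT + QT)⁻¹ - QT) *ᵥ vT) with hsTdef
    have hsB : 0 ≤ sB := span_nonneg _
    have hsT : 0 ≤ sT := span_nonneg _
    set e : ℝ := ε / (sB + sT + 1) with hedef
    have he : 0 < e := div_pos hε (by linarith)
    set γ' := max γ₀ (1 - e) with hγ'def
    have hγ'0 : 0 ≤ γ' := le_trans hγ₀.1.le (le_max_left _ _)
    have hγ'1 : γ' < 1 := max_lt hγ₀.2 (by linarith)
    have h1γ' : 1 - γ' ≤ e := by
      have := le_max_right γ₀ (1 - e)
      linarith
    have h1γpos : 0 < 1 - γ' := by linarith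
    have hlowT := (resApply_sandwich hMTst hQT hγ'0 hγ'1 vT x).1
    have hupB := (resApply_sandwich hMst hQ hγ'0 hγ'1 v x).2
    have hBW : dval p r γ' polT x ≤ dval p r γ' polB x :=
      hBopt γ' ⟨le_max_left _ _, hγ'1⟩ polT hpolT x
    have hdT : dval p r γ' polT x = resApply γ' MT vT x := rfl
    have hdB : dval p r γ' polB x = resApply γ' M v x := rfl
    rw [hdT, hdB] at hBW
    have hfx : f x = (QT *ᵥ vT) x := congrFun hfQ x
    have hρx : ρ x = (Q *ᵥ v) x := congrFun hρQ x
    have h2 : (1-γ')⁻¹ * (f x - ρ x) ≤ sB + sT := by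
      rw [hfx, hρx]
      rw [← hsBdef] at hupB
      rw [← hsTdef] at hlowT
      have := le_trans hlowT (le_trans hBW hupB)
      have hexp : (1-γ')⁻¹ * ((QT *ᵥ vT) x - (Q *ᵥ v) x)
          = (1-γ')⁻¹ * ((QT *ᵥ vT) x) - (1-γ')⁻¹ * ((Q *ᵥ v) x) := by ring
      linarith
    have h3 := mul_le_mul_of_nonneg_left h2 h1γpos.le
    rw [← mul_assoc, mul_inv_cancel₀ (ne_of_gt h1γpos), one_mul] at h3
    have h4 : (1-γ') * (sB + sT) ≤ e * (sB + sT) :=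
      mul_le_mul_of_nonneg_right h1γ' (by linarith)
    have h5 : e * (sB + sT) ≤ ε := by
      rw [hedef, div_mul_eq_mul_div, div_le_iff₀ (by linarith : (0:ℝ) < sB + sT + 1)]
      nlinarith
    linarith
  intro s s'
  have hall : ∀ x, ρ x = m := fun x =>
    le_antisymm (hsmax x) (by rw [← hfm x]; exact hdom x)
  rw [hall s, hall s']

end ConstSec

end AuxMat
end MyAux

/-- Average-to-discount reduction for weakly communicating MDPs. Suppose
`(p, r)` is weakly communicating with `sp(h^*) ≤ H` (with `H ≥ 1`). Fix `ε ∈ (0,1]` and set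
`γ = 1 - ε/H`. Then for any `ε_γ ∈ [0, 1/(1-γ)]`, if `π` is an `ε_γ`-optimal policy for the
`γ`-discounted MDP, `ρ^* - ρ^π ≤ (8 + 3ε_γ/H)·ε·1` elementwise. -/
theorem stmt5 {S A : Type*} [Fintype S] [Fintype A] [DecidableEq S] [DecidableEq A]
    [Nonempty S] [Nonempty A]
    (p : S → A → S → ℝ) (hp : IsKernel p)
    (r : S → A → ℝ) (hr : ∀ s a, r s a ∈ Set.Icc (0 : ℝ) 1)
    (hwc : WeaklyCommunicating p)
    (polB : S → A → ℝ) (hpolB : Blackwell p r polB)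
    (H : ℝ) (hH1 : 1 ≤ H) (hspan : span (bias p r polB) ≤ H)
    (ε : ℝ) (hε : ε ∈ Set.Ioc (0 : ℝ) 1)
    (γ : ℝ) (hγ : γ = 1 - ε / H)
    (εγ : ℝ) (hεγ : εγ ∈ Set.Icc (0 : ℝ) (1 / (1 - γ)))
    (pol : S → A → ℝ) (hpol : IsPolicy pol)
    (hopt : ‖dvalStar p r γ - dval p r γ pol‖ ≤ εγ) :
    ∀ s, gain p r polB s - gain p r pol s ≤ (8 + 3 * εγ / H) * ε := by
  classical
  intro s
  obtain ⟨hε0, hε1⟩ := hε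
  obtain ⟨hεγ0, hεγ1⟩ := hεγ
  have hH0 : (0:ℝ) < H := lt_of_lt_of_le one_pos hH1
  have h1γ : 1 - γ = ε / H := by rw [hγ]; ring
  have hγpos : 0 < 1 - γ := by rw [h1γ]; positivity
  have hγ0 : 0 ≤ γ := by
    rw [hγ]
    have : ε / H ≤ 1 := (div_le_one hH0).mpr (le_trans hε1 hH1)
    linarith
  have hγ1 : γ < 1 := by linarith
  set M := polMat p polB with hMdef
  have hMst : Stoch M := polMat_stoch hp hpolB.1
  obtain ⟨Q, hQ⟩ := exists_cesLim hMst
  set v : S → ℝ := polRew r polB with hvdef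
  have hbias : bias p r polB = ((1 - M + Q)⁻¹ - Q) *ᵥ v := bias_eq_Q hQ
  have hspan' : span (((1 - M + Q)⁻¹ - Q) *ᵥ v) ≤ H := by rw [← hbias]; exact hspan
  obtain ⟨s₀, hs₀⟩ := Finite.exists_min (dval p r γ pol)
  have hlow : (1 - γ) * dval p r γ pol s₀ ≤ gain p r pol s :=
    gain_ge_min_dval hp hr hpol hγ0 hγ1 s s₀ hs₀
  have hconst : gain p r polB s = gain p r polB s₀ := gain_const hp hr hwc hpolB s s₀
  have hgain_eq : gain p r polB = Q *ᵥ v := gain_eq_Q hQ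
  have hsand := (resApply_sandwich hMst hQ hγ0 hγ1 v s₀).1
  have hdB : dval p r γ polB s₀ = resApply γ M v s₀ := rfl
  -- X ≤ (1-γ) * (A + H)
  have h6 : (Q *ᵥ v) s₀ ≤ (1 - γ) * (dval p r γ polB s₀ + H) := by
    have e : (Q *ᵥ v) s₀ = (1 - γ) * ((1 - γ)⁻¹ * ((Q *ᵥ v) s₀)) := by
      field_simp
    rw [e]
    apply mul_le_mul_of_nonneg_left _ hγpos.le
    rw [hdB]
    linarith
  -- A ≤ Dv + εγ
  have hbdd : BddAbove (Set.range fun q : {q : S → A → ℝ // IsPolicy q} =>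
      dval p r γ q.1 s₀) := by
    refine ⟨(1 - γ)⁻¹, ?_⟩
    rintro y ⟨q, rfl⟩
    exact (resApply_bounds (polMat_stoch hp q.2) hγ0 hγ1
      (fun s' => polRew_bounds hr q.2 s') s₀).2
  have hstar : dval p r γ polB s₀ ≤ dvalStar p r γ s₀ :=
    le_ciSup hbdd ⟨polB, hpolB.1⟩
  have hptw : dvalStar p r γ s₀ - dval p r γ pol s₀ ≤ εγ := by
    have h1 := norm_le_pi_norm (dvalStar p r γ - dval p r γ pol) s₀
    rw [Real.norm_eq_abs] at h1
    have h2 : |(dvalStar p r γ - dval p r γ pol) s₀| ≤ εγ := le_trans h1 hopt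
    have h3 := (abs_le.mp h2).2
    simpa using h3
  have h8 : (1 - γ) * (dval p r γ polB s₀ + H)
      ≤ (1 - γ) * (dval p r γ pol s₀ + εγ + H) :=
    mul_le_mul_of_nonneg_left (by linarith) hγpos.le
  have h9 : (1 - γ) * (dval p r γ pol s₀ + εγ + H) - (1 - γ) * dval p r γ pol s₀
      = (1 - γ) * (εγ + H) := by ring
  have h10 : (1 - γ) * (εγ + H) = ε * (εγ / H) + ε := by
    rw [h1γ]
    field_simp
  have h11 : ε * (εγ / H) + ε ≤ (8 + 3 * εγ / H) * ε := by
    have hq : 0 ≤ εγ / H := div_nonneg hεγ0 hH0.le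
    have hqe : 0 ≤ (εγ / H) * ε := mul_nonneg hq hε0.le
    have e : (8 + 3 * εγ / H) * ε = 8 * ε + 3 * ((εγ / H) * ε) := by ring
    rw [e]
    linarith
  have hXs : gain p r polB s = (Q *ᵥ v) s₀ := by
    rw [hconst, hgain_eq]
  linarith

end PaperMDP
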